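/- arXiv:2510.24665 — 8 statements merged into one kernel-verified Lean document; each statement's English description precedes it below -/
import Mathlib

section
/- Let k be a field and let f ∈ k[x₀,x₁,x₂,x₃] be a homogeneous polynomial of degree 3 defining a smooth cubic surface X = {f = 0} ⊂ ℙ³_k, and assume the dehomogenization g := f(1,x₁,x₂,x₃) is irreducible, with function field F := Frac(k[x₁,x₂,x₃]/(g)). Then the degree of irrationality of F over k belongs to {1, 2, 3}. -/
open MvPolynomial

/-- The rational function field `k(t₁,t₂)`: the fraction field of the polynomial
ring in two variables over `k`. -/
noncomputable abbrev RatFunc2 (k : Type*) [Field k] : Type _ :=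
  FractionRing (MvPolynomial (Fin 2) k)

/-- The degree of irrationality of a field extension `F/k`: the minimum of the degrees
`[F : E]` over all intermediate fields `k ⊆ E ⊆ F` such that `F/E` is finite and `E` is
`k`-isomorphic to the rational function field `k(t₁,t₂)`. -/
noncomputable def degreeOfIrrationality (k F : Type*) [Field k] [Field F] [Algebra k F] : ℕ :=
  sInf {n : ℕ | ∃ E : IntermediateField k F,
    Nonempty (↥E ≃ₐ[k] RatFunc2 k) ∧
    FiniteDimensional ↥E F ∧ Module.finrank (↥E) F = n}

/-! Projection from a point: choose a variable `xᵢ` on which the dehomogenized equation `g`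
depends. The images of the two other variables in `F` are algebraically independent, since a
nonzero multiple of `g` cannot be free of `xᵢ`, so they span a purely transcendental subfield
`E ≅ k(t₁, t₂)`. Over `E` the field `F` is generated by `xᵢ`, a root of `g` read as a polynomial
in `xᵢ`, whose degree is at most `deg g ≤ 3`. -/

open Module

namespace MvPolynomial

variable {R A σ τ : Type*}

theorem totalDegree_aeval_le_of_totalDegree_le_one [CommSemiring R] (p : MvPolynomial σ R)
    (s : σ → MvPolynomial τ R) (hs : ∀ j, (s j).totalDegree ≤ 1) :
    (aeval s p).totalDegree ≤ p.totalDegree := by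
  conv_lhs => rw [← support_sum_monomial_coeff p]
  rw [map_sum]
  refine (totalDegree_finsetSum _ _).trans (Finset.sup_le fun d hd => ?_)
  rw [aeval_monomial, algebraMap_eq]
  refine (totalDegree_mul _ _).trans ?_
  rw [totalDegree_C, zero_add, Finsupp.prod]
  refine (totalDegree_finsetProd _ _).trans (le_trans ?_ (le_totalDegree hd))
  calc ∑ j ∈ d.support, (s j ^ d j).totalDegree
      ≤ ∑ j ∈ d.support, d j * (s j).totalDegree :=
        Finset.sum_le_sum fun j _ => totalDegree_pow _ _
    _ ≤ ∑ j ∈ d.support, d j :=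
        Finset.sum_le_sum fun j _ => (Nat.mul_le_mul_left _ (hs j)).trans_eq (mul_one _)

theorem degreeOf_rename_eq_zero [CommSemiring R] {f : τ → σ} {i : σ} (hi : i ∉ Set.range f)
    (p : MvPolynomial τ R) : degreeOf i (rename f p) = 0 := by
  classical
  by_contra h
  obtain ⟨j, -, rfl⟩ :=
    Finset.mem_image.mp (vars_rename f p (mem_vars_iff_degreeOf_ne_zero.mpr h))
  exact hi ⟨j, rfl⟩

theorem degreeOf_le_of_dvd [CommSemiring R] [NoZeroDivisors R] {p q : MvPolynomial σ R}
    (h : p ∣ q) (hq : q ≠ 0) (i : σ) : degreeOf i p ≤ degreeOf i q := by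
  obtain ⟨r, rfl⟩ := h
  rw [degreeOf_mul_eq (left_ne_zero_of_mul hq) (right_ne_zero_of_mul hq)]
  omega

theorem exists_degreeOf_ne_zero_of_irreducible [Field R] {p : MvPolynomial σ R}
    (hp : Irreducible p) : ∃ i, degreeOf i p ≠ 0 := by
  by_contra! h
  have hC : p = C (p.coeff 0) := vars_eq_empty_iff_eq_C.mp <|
    Finset.eq_empty_of_forall_notMem fun i hi => mem_vars_iff_degreeOf_ne_zero.mp hi (h i)
  have hc : p.coeff 0 ≠ 0 := fun h0 => hp.ne_zero (by rw [hC, h0, map_zero])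
  exact hp.not_isUnit (hC ▸ (isUnit_iff_ne_zero.mpr hc).map C)

theorem natDegree_optionEquivLeft_rename [CommSemiring R] (e : Option τ ≃ σ)
    (p : MvPolynomial σ R) :
    (optionEquivLeft R τ (rename e.symm p)).natDegree = degreeOf (e none) p := by
  rw [natDegree_optionEquivLeft, ← degreeOf_rename_of_injective e.symm.injective (e none),
    e.symm_apply_apply]

theorem eval₂_optionEquivLeft_rename [CommSemiring R] [CommSemiring A] [Algebra R A]
    (φ : MvPolynomial σ R →ₐ[R] A) (e : Option τ ≃ σ) (p : MvPolynomial σ R) :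
    (optionEquivLeft R τ (rename e.symm p)).eval₂ (φ.comp (rename (e ∘ some)) : _ →+* A)
      (φ (X (e none))) = φ p := by
  induction p using MvPolynomial.induction_on with
  | C a => simp
  | add p q hp hq => simp only [map_add, Polynomial.eval₂_add, hp, hq]
  | mul_X p j hp =>
    obtain ⟨o, rfl⟩ := e.surjective j
    cases o <;> simp [Polynomial.eval₂_mul, hp]

end MvPolynomial

theorem IntermediateField.finrank_eq_natDegree_minpoly_of_adjoin_eq_top {K L : Type*} [Field K]
    [Field L] [Algebra K L] {α : L} (hα : IsIntegral K α) (htop : adjoin K {α} = ⊤) :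
    finrank K L = (minpoly K α).natDegree := by
  rw [← finrank_top', ← htop, adjoin.finrank hα]

theorem degreeOfIrrationality_mem_Icc {k F : Type*} [Field k] [Field F] [Algebra k F]
    (E : IntermediateField k F) (hE : Nonempty (E ≃ₐ[k] RatFunc2 k)) [FiniteDimensional E F] :
    degreeOfIrrationality k F ∈ Set.Icc 1 (finrank E F) := by
  have hmem : finrank E F ∈ {n : ℕ | ∃ E : IntermediateField k F,
      Nonempty (E ≃ₐ[k] RatFunc2 k) ∧ FiniteDimensional E F ∧ finrank E F = n} :=
    ⟨E, hE, ‹_›, rfl⟩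
  obtain ⟨E', -, _, hE'⟩ := Nat.sInf_mem ⟨_, hmem⟩
  refine ⟨?_, Nat.sInf_le hmem⟩
  rw [degreeOfIrrationality, ← hE']
  exact finrank_pos

section FunctionField

variable {k σ : Type*} [Field k] (g : MvPolynomial σ k) (F : Type*) [Field F] [Algebra k F]
  [Algebra (MvPolynomial σ k ⧸ Ideal.span {g}) F]
  [IsScalarTower k (MvPolynomial σ k ⧸ Ideal.span {g}) F]

noncomputable def toFunctionField : MvPolynomial σ k →ₐ[k] F :=
  (IsScalarTower.toAlgHom k (MvPolynomial σ k ⧸ Ideal.span {g}) F).comp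
    (Ideal.Quotient.mkₐ k _)

variable {g F} [IsFractionRing (MvPolynomial σ k ⧸ Ideal.span {g}) F]

theorem toFunctionField_eq_zero_iff {p : MvPolynomial σ k} :
    toFunctionField g F p = 0 ↔ g ∣ p := by
  rw [← Ideal.mem_span_singleton, ← Ideal.Quotient.eq_zero_iff_mem, toFunctionField,
    AlgHom.comp_apply, IsScalarTower.toAlgHom_apply, IsFractionRing.to_map_eq_zero_iff]
  rfl

theorem IntermediateField.eq_top_of_toFunctionField_X_mem (S : IntermediateField k F)
    (hS : ∀ j, toFunctionField g F (X j) ∈ S) : S = ⊤ := by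
  have hmem : ∀ p, toFunctionField g F p ∈ S := fun p => by
    induction p using MvPolynomial.induction_on with
    | C a => simp
    | add p q hp hq => simpa using S.add_mem hp hq
    | mul_X p j hp => simpa using S.mul_mem hp (hS j)
  refine eq_top_iff.mpr fun x _ => ?_
  obtain ⟨a, b, -, rfl⟩ :=
    IsFractionRing.div_surjective (A := MvPolynomial σ k ⧸ Ideal.span {g}) x
  obtain ⟨p, rfl⟩ := Ideal.Quotient.mk_surjective a
  obtain ⟨q, rfl⟩ := Ideal.Quotient.mk_surjective b
  exact S.div_mem (hmem p) (hmem q)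

variable {τ : Type*} (e : Option τ ≃ σ)

theorem injective_toFunctionField_comp_rename (hg : degreeOf (e none) g ≠ 0) :
    Function.Injective ((toFunctionField g F).comp (rename (e ∘ some))) := by
  refine (injective_iff_map_eq_zero _).mpr fun p hp => ?_
  have hrename : rename (e ∘ some) p = 0 := by
    by_contra h
    refine hg (Nat.le_zero.mp ?_)
    calc degreeOf (e none) g
        ≤ degreeOf (e none) (rename (e ∘ some) p) :=
          degreeOf_le_of_dvd (toFunctionField_eq_zero_iff.mp hp) h _
      _ = 0 := degreeOf_rename_eq_zero (by simp) p
  exact rename_injective _ (e.injective.comp (Option.some_injective τ))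
    (hrename.trans (map_zero _).symm)

theorem adjoin_toFunctionField_X_none_eq_top {E : IntermediateField k F}
    (hE : ∀ t, toFunctionField g F (X (e (some t))) ∈ E) :
    IntermediateField.adjoin E {toFunctionField g F (X (e none))} = ⊤ := by
  refine (IntermediateField.restrictScalars_eq_top_iff (K := k)).mp
    (IntermediateField.eq_top_of_toFunctionField_X_mem (g := g) _ fun j => ?_)
  obtain ⟨_ | t, rfl⟩ := e.surjective j
  · exact IntermediateField.mem_adjoin_simple_self E _
  · exact IntermediateField.algebraMap_mem _ (⟨_, hE t⟩ : E)

theorem exists_intermediateField_finrank_le_degreeOf (hg : degreeOf (e none) g ≠ 0) :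
    ∃ E : IntermediateField k F, Nonempty (E ≃ₐ[k] FractionRing (MvPolynomial τ k)) ∧
      FiniteDimensional E F ∧ finrank E F ≤ degreeOf (e none) g := by
  set ψ := (toFunctionField g F).comp (rename (e ∘ some))
  have hψ : Function.Injective ψ := injective_toFunctionField_comp_rename e hg
  let Λ : FractionRing (MvPolynomial τ k) →ₐ[k] F := IsFractionRing.liftAlgHom hψ
  have hψE : ∀ p, ψ p ∈ Λ.fieldRange := fun p =>
    ⟨algebraMap _ _ p, IsFractionRing.lift_algebraMap hψ p⟩
  let ψE : MvPolynomial τ k →+* Λ.fieldRange :=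
    (ψ : _ →+* F).codRestrict Λ.fieldRange.toSubring hψE
  have hψE_inj : Function.Injective ψE := fun p q h => hψ (congrArg Subtype.val h)
  set α := toFunctionField g F (X (e none))
  set q := (optionEquivLeft k τ (rename e.symm g)).map ψE
  have hq : q ≠ 0 := by
    rw [Ne, Polynomial.map_eq_zero_iff hψE_inj, EmbeddingLike.map_eq_zero_iff,
      map_eq_zero_iff _ (rename_injective _ e.symm.injective)]
    rintro rfl
    simp at hg
  have hqα : Polynomial.aeval α q = 0 := by
    rw [Polynomial.aeval_def, Polynomial.eval₂_map]
    exact (eval₂_optionEquivLeft_rename _ e g).trans (toFunctionField_eq_zero_iff.mpr dvd_rfl)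
  have hα : IsIntegral Λ.fieldRange α := IsAlgebraic.isIntegral ⟨q, hq, hqα⟩
  have hrank := IntermediateField.finrank_eq_natDegree_minpoly_of_adjoin_eq_top hα
    (adjoin_toFunctionField_X_none_eq_top e fun t => by simpa [ψ] using hψE (X t))
  refine ⟨Λ.fieldRange, ⟨(AlgEquiv.ofInjectiveField Λ).symm⟩,
    finite_of_finrank_pos (hrank ▸ minpoly.natDegree_pos hα), ?_⟩
  calc finrank Λ.fieldRange F = (minpoly Λ.fieldRange α).natDegree := hrank
    _ ≤ q.natDegree := Polynomial.natDegree_le_of_dvd (minpoly.dvd _ _ hqα) hq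
    _ = degreeOf (e none) g := by
      rw [Polynomial.natDegree_map_eq_of_injective hψE_inj, natDegree_optionEquivLeft_rename]

end FunctionField

theorem degreeOfIrrationality_cubic_mem_general
    (k : Type) [Field k]
    (f : MvPolynomial (Fin 4) k) (hdeg : f.IsHomogeneous 3)
    (g : MvPolynomial (Fin 3) k) (hg : g = aeval (Fin.cons 1 X) f)
    (hirr : Irreducible g)
    (F : Type) [Field F] [Algebra k F]
    [Algebra (MvPolynomial (Fin 3) k ⧸ Ideal.span {g}) F]
    [IsScalarTower k (MvPolynomial (Fin 3) k ⧸ Ideal.span {g}) F]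
    [IsFractionRing (MvPolynomial (Fin 3) k ⧸ Ideal.span {g}) F] :
    degreeOfIrrationality k F ∈ ({1, 2, 3} : Set ℕ) := by
  obtain ⟨i, hi⟩ := exists_degreeOf_ne_zero_of_irreducible hirr
  rw [← finSuccEquiv'_symm_none i] at hi
  obtain ⟨E, hE, _, hEi⟩ := exists_intermediateField_finrank_le_degreeOf (F := F) _ hi
  have hi3 : degreeOf i g ≤ 3 := calc
    degreeOf i g ≤ g.totalDegree := degreeOf_le_totalDegree g i
    _ ≤ f.totalDegree := hg ▸ totalDegree_aeval_le_of_totalDegree_le_one f _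
      (Fin.cases (by simp) fun j => by simp)
    _ ≤ 3 := hdeg.totalDegree_le
  obtain ⟨h1, hle⟩ := degreeOfIrrationality_mem_Icc E hE
  rw [finSuccEquiv'_symm_none] at hEi
  simp only [Set.mem_insert_iff, Set.mem_singleton_iff]
  omega

/-- The degree of irrationality of a smooth cubic surface in `ℙ³` over a field `k`
is `1`, `2`, or `3`. -/
theorem degreeOfIrrationality_cubic_mem
    (k : Type) [Field k]
    (f : MvPolynomial (Fin 4) k) (hdeg : f.IsHomogeneous 3)
    (hsmooth : ∀ v : Fin 4 → AlgebraicClosure k, v ≠ 0 →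
      ¬ (eval v (MvPolynomial.map (algebraMap k (AlgebraicClosure k)) f) = 0 ∧
         ∀ i : Fin 4,
           eval v (MvPolynomial.map (algebraMap k (AlgebraicClosure k)) (pderiv i f)) = 0))
    (g : MvPolynomial (Fin 3) k) (hg : g = aeval (Fin.cons 1 X) f)
    (hirr : Irreducible g)
    (F : Type) [Field F] [Algebra k F]
    [Algebra (MvPolynomial (Fin 3) k ⧸ Ideal.span {g}) F]
    [IsScalarTower k (MvPolynomial (Fin 3) k ⧸ Ideal.span {g}) F]
    [IsFractionRing (MvPolynomial (Fin 3) k ⧸ Ideal.span {g}) F] :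
    degreeOfIrrationality k F ∈ ({1, 2, 3} : Set ℕ) :=
  degreeOfIrrationality_cubic_mem_general k f hdeg g hg hirr F
end

section
/- Let k be a field and let f ∈ k[x₀,x₁,x₂,x₃] be a homogeneous polynomial of degree 3. If f(v) ≠ 0 for every nonzero v ∈ k⁴, then for every field extension K/k with [K:k] = 2 and every nonzero v ∈ K⁴ one has f(v) ≠ 0. (A cubic surface over k with no k-rational point has no points over any quadratic extension of k.) -/
/-!
Write `v = b α + a` with `a, b ∈ k⁴`, where `α ∉ k`. The restriction of `f` to the line
`t ↦ b t + a` is a polynomial over `k` of degree at most `3` vanishing at `α`; if `b ≠ 0` its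
`t³`-coefficient `f(b)` is nonzero, so after dividing by the quadratic minimal polynomial of `α`
a linear factor, hence a root `t ∈ k`, remains. Then `b t + a` is a `k`-zero of `f`, so it is
`0`, and `v = (α - t) b` is a nonzero multiple of a `k`-point, where `f` cannot vanish.
-/

open MvPolynomial

namespace Polynomial

variable {R : Type*} [CommSemiring R]

theorem coeff_prod_sum_of_natDegree_le {ι : Type*} (s : Finset ι) (p : ι → R[X]) (d : ι → ℕ)
    (h : ∀ i ∈ s, (p i).natDegree ≤ d i) :
    (∏ i ∈ s, p i).coeff (∑ i ∈ s, d i) = ∏ i ∈ s, (p i).coeff (d i) := by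
  classical
  induction s using Finset.cons_induction with
  | empty => simp
  | cons i s his ih =>
    rw [Finset.forall_mem_cons] at h
    rw [Finset.prod_cons, Finset.sum_cons, Finset.prod_cons,
      coeff_mul_add_eq_of_natDegree_le h.1
        ((natDegree_prod_le _ _).trans (Finset.sum_le_sum h.2)), ih h.2]

theorem natDegree_linear_pow_le (a b : R) (m : ℕ) : ((C a * X + C b) ^ m).natDegree ≤ m :=
  (natDegree_pow_le_of_le m natDegree_linear_le).trans_eq (mul_one m)

theorem coeff_linear_pow_self (a b : R) (m : ℕ) : ((C a * X + C b) ^ m).coeff m = a ^ m := by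
  simpa using coeff_pow_of_natDegree_le (m := m) (natDegree_linear_le (a := a) (b := b))

end Polynomial

namespace MvPolynomial

variable {R S σ : Type*} [CommSemiring R] [CommSemiring S] [Algebra R S]

noncomputable def restrictLine (f : MvPolynomial σ R) (a b : σ → R) : Polynomial R :=
  aeval (fun i => Polynomial.C (b i) * Polynomial.X + Polynomial.C (a i)) f

theorem aeval_restrictLine (f : MvPolynomial σ R) (a b : σ → R) (s : S) :
    Polynomial.aeval s (f.restrictLine a b) =
      aeval (fun i => algebraMap R S (b i) * s + algebraMap R S (a i)) f := by
  rw [restrictLine, ← AlgHom.comp_apply, comp_aeval]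
  simp

theorem eval_restrictLine (f : MvPolynomial σ R) (a b : σ → R) (t : R) :
    (f.restrictLine a b).eval t = eval (fun i => b i * t + a i) f := by
  simpa using aeval_restrictLine (S := R) f a b t

theorem aeval_algebraMap_comp (f : MvPolynomial σ R) (x : σ → R) :
    aeval (algebraMap R S ∘ x) f = algebraMap R S (eval x f) := by
  rw [aeval_def, eval, coe_eval₂Hom, eval₂_comp_left]
  rfl

namespace IsHomogeneous

variable {f : MvPolynomial σ R} {n : ℕ}

theorem aeval_smul (hf : f.IsHomogeneous n) (c : S) (x : σ → S) :
    MvPolynomial.aeval (c • x) f = c ^ n * MvPolynomial.aeval x f := by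
  simp only [aeval_def, eval₂_eq, Finset.mul_sum]
  refine Finset.sum_congr rfl fun d hd => ?_
  rw [hf.degree_eq_sum_deg_support hd]
  simp only [Pi.smul_apply, smul_eq_mul, mul_pow, Finset.prod_mul_distrib,
    Finset.prod_pow_eq_pow_sum]
  ring

theorem natDegree_restrictLine_le (hf : f.IsHomogeneous n) (a b : σ → R) :
    (f.restrictLine a b).natDegree ≤ n := by
  rw [restrictLine, aeval_def, eval₂_eq]
  refine Polynomial.natDegree_sum_le_of_forall_le _ _ fun d hd => ?_
  refine (Polynomial.natDegree_C_mul_le _ _).trans ?_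
  rw [hf.degree_eq_sum_deg_support hd]
  exact (Polynomial.natDegree_prod_le _ _).trans
    (Finset.sum_le_sum fun i _ => Polynomial.natDegree_linear_pow_le _ _ _)

theorem coeff_restrictLine (hf : f.IsHomogeneous n) (a b : σ → R) :
    (f.restrictLine a b).coeff n = eval b f := by
  rw [restrictLine, aeval_def, eval₂_eq, eval_eq, Polynomial.finsetSum_coeff]
  refine Finset.sum_congr rfl fun d hd => ?_
  rw [Polynomial.algebraMap_eq, Polynomial.coeff_C_mul, hf.degree_eq_sum_deg_support hd,
    Polynomial.coeff_prod_sum_of_natDegree_le _ _ _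
      fun i _ => Polynomial.natDegree_linear_pow_le _ _ _]
  simp only [Polynomial.coeff_linear_pow_self]

theorem natDegree_restrictLine (hf : f.IsHomogeneous n) (a : σ → R) {b : σ → R}
    (hb : eval b f ≠ 0) : (f.restrictLine a b).natDegree = n :=
  (hf.natDegree_restrictLine_le a b).antisymm
    (Polynomial.le_natDegree_of_ne_zero (by rwa [hf.coeff_restrictLine]))

end IsHomogeneous

end MvPolynomial

section QuadraticExtension

variable {k K : Type*} [Field k] [Ring K] [Algebra k K]

theorem exists_notMem_range_algebraMap_of_one_lt_finrank (hK : 1 < Module.finrank k K) :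
    ∃ α : K, α ∉ Set.range (algebraMap k K) := by
  have : Nontrivial K := Module.nontrivial_of_finrank_pos (R := k) (by omega)
  by_contra! h
  have hbot : (⊥ : Subalgebra k K) = ⊤ := eq_top_iff.mpr fun x _ => Algebra.mem_bot.mpr (h x)
  have := Subalgebra.bot_eq_top_iff_finrank_eq_one.mp hbot
  omega

theorem exists_eq_algebraMap_mul_add_algebraMap (hK : Module.finrank k K = 2) {α : K}
    (hα : α ∉ Set.range (algebraMap k K)) (x : K) :
    ∃ b a : k, x = algebraMap k K b * α + algebraMap k K a := by
  have : Nontrivial K := Module.nontrivial_of_finrank_eq_succ hK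
  have hli : LinearIndependent k ![α, 1] := by
    refine linearIndependent_fin2.mpr ⟨by simp, fun c hc => hα ⟨c, ?_⟩⟩
    simpa [Algebra.algebraMap_eq_smul_one] using hc
  have hspan := hli.span_eq_top_of_card_eq_finrank (by simp [hK])
  rw [Matrix.range_cons_cons_empty] at hspan
  obtain ⟨b, a, hx⟩ := Submodule.mem_span_pair.mp (hspan ▸ Submodule.mem_top : x ∈ _)
  exact ⟨b, a, by rw [← hx, Algebra.smul_def, Algebra.algebraMap_eq_smul_one a]⟩

theorem Polynomial.exists_isRoot_of_aeval_eq_zero_of_natDegree_eq {g : Polynomial k} {α : K}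
    (hg : Polynomial.aeval α g = 0) (hdeg : g.natDegree = (minpoly k α).natDegree + 1) :
    ∃ t, g.IsRoot t := by
  obtain ⟨q, rfl⟩ := minpoly.dvd k α hg
  have hq : q ≠ 0 := by rintro rfl; simp at hdeg
  have hα : minpoly k α ≠ 0 := fun h => by simp [h] at hdeg
  rw [Polynomial.natDegree_mul hα hq, add_right_inj] at hdeg
  obtain ⟨t, ht⟩ :=
    Polynomial.exists_root_of_degree_eq_one ((Polynomial.degree_eq_iff_natDegree_eq hq).mpr hdeg)
  exact ⟨t, by simp [Polynomial.IsRoot, ht.eq_zero]⟩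

theorem minpoly.natDegree_eq_two_of_finrank_eq_two (hK : Module.finrank k K = 2) {α : K}
    (hα : α ∉ Set.range (algebraMap k K)) :
    (minpoly k α).natDegree = 2 := by
  have : Nontrivial K := Module.nontrivial_of_finrank_eq_succ hK
  have : FiniteDimensional k K := .of_finrank_pos (by omega)
  have hint : IsIntegral k α := .of_finite k α
  refine le_antisymm (hK ▸ minpoly.natDegree_le α) ((minpoly.two_le_natDegree_iff hint).mpr ?_)
  exact fun ⟨c, hc⟩ => hα ⟨c, hc⟩

end QuadraticExtension

/-- A cubic surface (or cone) over `k` with no nonzero `k`-zero has no nonzero zero over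
any field extension of degree `2`. -/
theorem no_point_over_quadratic_extension_of_cubic
    (k : Type) [Field k]
    (f : MvPolynomial (Fin 4) k) (hdeg : f.IsHomogeneous 3)
    (hnopoint : ∀ v : Fin 4 → k, v ≠ 0 → eval v f ≠ 0) :
    ∀ (K : Type) [Field K] [Algebra k K], Module.finrank k K = 2 →
      ∀ v : Fin 4 → K, v ≠ 0 → eval v (MvPolynomial.map (algebraMap k K) f) ≠ 0 := by
  intro K _ _ hK v hv hfv
  rw [eval_map, ← aeval_def] at hfv
  have hzero (w : Fin 4 → k) (hw : eval w f = 0) : w = 0 := not_imp_not.mp (hnopoint w) hw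
  obtain ⟨α, hα⟩ := exists_notMem_range_algebraMap_of_one_lt_finrank (k := k) (K := K) (by omega)
  choose b a hv_eq using fun i => exists_eq_algebraMap_mul_add_algebraMap hK hα (v i)
  by_cases hb : b = 0
  · have hva : v = algebraMap k K ∘ a := funext fun i => by simp [hv_eq i, hb]
    rw [hva, aeval_algebraMap_comp, map_eq_zero] at hfv
    exact hv (by rw [hva, hzero a hfv]; ext; simp)
  have hline : Polynomial.aeval α (f.restrictLine a b) = 0 := by
    rw [aeval_restrictLine, ← hfv]
    exact congrArg (aeval · f) (funext fun i => (hv_eq i).symm)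
  obtain ⟨t, ht⟩ := Polynomial.exists_isRoot_of_aeval_eq_zero_of_natDegree_eq hline <| by
    rw [hdeg.natDegree_restrictLine a (hnopoint b hb),
      minpoly.natDegree_eq_two_of_finrank_eq_two hK hα]
  have hat := congrFun (hzero _ (by rwa [← eval_restrictLine]))
  have hvb : v = (α - algebraMap k K t) • (algebraMap k K ∘ b) := funext fun i => by
    simp only [hv_eq i, eq_neg_of_add_eq_zero_right (hat i), map_neg, map_mul, Pi.smul_apply,
      Function.comp_apply, smul_eq_mul]
    ring
  have hαt : α - algebraMap k K t ≠ 0 := sub_ne_zero.mpr fun h => hα ⟨t, h.symm⟩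
  rw [hvb, hdeg.aeval_smul, aeval_algebraMap_comp] at hfv
  exact mul_ne_zero (pow_ne_zero 3 hαt) ((map_ne_zero _).mpr (hnopoint b hb)) hfv
end

section
/- Let k be a field and let q₁, q₂ ∈ k[x₀,…,x₄] be homogeneous polynomials of degree 2. If q₁ and q₂ have no common nonzero zero in k⁵, then for every field extension K/k with [K:k] = 3, the forms q₁ and q₂ have no common nonzero zero in K⁵. (An intersection of two quadrics in ℙ⁴ over k with a point over a cubic extension of k has a k-rational point.) -/
/-!
Write `K = k[θ]`: any `θ ∉ k` generates `K` because `[K : k] = 3` is prime. A common zero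
`v ∈ K⁵` is then `z(θ)` for a vector `z ∈ k[t]⁵` of degree `≤ 2`, and the minimal polynomial
`f` of `θ` (of degree `3`) divides both `qᵢ(z)`, which have degree `≤ 4`; so `qᵢ(z) = f lᵢ` with
`deg lᵢ ≤ 1`.

If `l₁ = α₁ t + β₁` and `l₂ = α₂ t + β₂` are linearly independent, `l₂ q₁(z) = l₁ q₂(z)` says that
`z` is a zero over `k[t]` of the pencil `(β₂ q₁ - β₁ q₂) + t (α₂ q₁ - α₁ q₂)`, and the Amer–Brumer
descent produces a common `k`-zero of the pencil, hence of `q₁, q₂`: a polynomial zero of degree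
`n + 1` of `q₁ + t q₂` has leading coefficient `c` with `q₂(c) = 0`, and either `q₁(c) = 0` or the
reflection in `c` lowers the degree. If `l₁, l₂` are dependent they have a common root in `ℙ¹(k)`,
and `z` evaluated there is a common `k`-zero, unless it vanishes, in which case `z` divided by the
corresponding linear factor is a zero of both forms over `k[t]`.
-/

open MvPolynomial

theorem Finsupp.exists_eq_single_add_single_of_degree_eq_two {σ : Type*} {d : σ →₀ ℕ}
    (hd : d.degree = 2) : ∃ i j, d = Finsupp.single i 1 + Finsupp.single j 1 := by
  classical
  have hcard : Multiset.card (Finsupp.toMultiset d) = 2 := by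
    rw [Finsupp.card_toMultiset, ← hd, Finsupp.degree_apply]; rfl
  obtain ⟨i, j, hij⟩ := Multiset.card_eq_two.mp hcard
  refine ⟨i, j, ?_⟩
  rw [← Multiset.toFinsupp_eq_iff.mpr hij.symm, Multiset.insert_eq_cons, ← Multiset.singleton_add,
    Multiset.toFinsupp_add, Multiset.toFinsupp_singleton, Multiset.toFinsupp_singleton]

theorem QuadraticMap.map_add_smul {R M : Type*} [CommRing R] [AddCommGroup M] [Module R M]
    (Q : QuadraticMap R M R) (x y : M) (a : R) :
    Q (x + a • y) = Q x + a * QuadraticMap.polar Q x y + a ^ 2 * Q y := by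
  rw [QuadraticMap.map_add (⇑Q) x (a • y), QuadraticMap.polar_smul_right, QuadraticMap.map_smul,
    smul_eq_mul, smul_eq_mul]
  ring

namespace MvPolynomial

variable {σ k : Type*} [CommRing k] {q : MvPolynomial σ k}

theorem IsHomogeneous.exists_quadraticMap_eq_aeval (hq : q.IsHomogeneous 2)
    (R : Type*) [CommRing R] [Algebra k R] :
    ∃ Q : QuadraticMap R (σ → R) R, ∀ x, Q x = MvPolynomial.aeval x q := by
  classical
  rw [q.as_sum]
  refine Finset.sum_induction _
    (fun p => ∃ Q : QuadraticMap R (σ → R) R, ∀ x, Q x = MvPolynomial.aeval x p)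
    (fun p p' ⟨Q, hQ⟩ ⟨Q', hQ'⟩ => ⟨Q + Q', fun x => by simp [hQ, hQ']⟩)
    ⟨0, fun x => by simp⟩ fun d hd => ?_
  have hdeg : d.degree = 2 := by
    rw [Finsupp.degree_eq_weight_one]; exact hq (mem_support_iff.mp hd)
  obtain ⟨i, j, rfl⟩ := Finsupp.exists_eq_single_add_single_of_degree_eq_two hdeg
  refine ⟨algebraMap k R (q.coeff (Finsupp.single i 1 + Finsupp.single j 1)) •
    QuadraticMap.proj i j, fun x => ?_⟩
  rw [aeval_monomial, Finsupp.prod_add_index' (fun _ => pow_zero _) (fun _ _ _ => pow_add _ _ _),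
    smul_apply, QuadraticMap.proj_apply]
  simp [Finsupp.prod_single_index]

noncomputable def IsHomogeneous.toQuadraticMap (hq : q.IsHomogeneous 2)
    (R : Type*) [CommRing R] [Algebra k R] : QuadraticMap R (σ → R) R :=
  (Classical.choose (hq.exists_quadraticMap_eq_aeval R)).copy (fun x => MvPolynomial.aeval x q)
    (_root_.funext fun x => (Classical.choose_spec (hq.exists_quadraticMap_eq_aeval R) x).symm)

variable {R S : Type*} [CommRing R] [Algebra k R] [CommRing S] [Algebra k S]

@[simp]
theorem IsHomogeneous.toQuadraticMap_apply (hq : q.IsHomogeneous 2) (x : σ → R) :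
    (hq.toQuadraticMap R) x = MvPolynomial.aeval x q :=
  rfl

theorem IsHomogeneous.map_toQuadraticMap (hq : q.IsHomogeneous 2) (φ : R →ₐ[k] S)
    (x : σ → R) : φ ((hq.toQuadraticMap R) x) = (hq.toQuadraticMap S) (φ ∘ x) :=
  comp_aeval_apply x φ q

theorem IsHomogeneous.map_polar_toQuadraticMap (hq : q.IsHomogeneous 2) (φ : R →ₐ[k] S)
    (x y : σ → R) :
    φ (QuadraticMap.polar (hq.toQuadraticMap R) x y) =
      QuadraticMap.polar (hq.toQuadraticMap S) (φ ∘ x) (φ ∘ y) := by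
  simp only [QuadraticMap.polar, map_sub, hq.map_toQuadraticMap]
  rw [show ⇑φ ∘ (x + y) = ⇑φ ∘ x + ⇑φ ∘ y from _root_.funext fun _ => map_add φ _ _]

end MvPolynomial

def HasNontrivialCommonZero {σ k : Type*} [CommRing k] (q₁ q₂ : MvPolynomial σ k) : Prop :=
  ∃ y : σ → k, y ≠ 0 ∧ MvPolynomial.eval y q₁ = 0 ∧ MvPolynomial.eval y q₂ = 0

theorem hasNontrivialCommonZero_of_combination {σ k : Type*} [Field k]
    {q₁ q₂ : MvPolynomial σ k} {a b c d : k} (hdet : a * d - b * c ≠ 0)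
    (h : HasNontrivialCommonZero (C a * q₁ + C b * q₂) (C c * q₁ + C d * q₂)) :
    HasNontrivialCommonZero q₁ q₂ := by
  obtain ⟨y, hy, h₁, h₂⟩ := h
  simp only [map_add, map_mul, MvPolynomial.eval_C] at h₁ h₂
  refine ⟨y, hy, ?_, ?_⟩
  · exact (mul_eq_zero.mp
      (by linear_combination d * h₁ - b * h₂ : (a * d - b * c) * _ = 0)).resolve_left hdet
  · exact (mul_eq_zero.mp
      (by linear_combination a * h₂ - c * h₁ : (a * d - b * c) * _ = 0)).resolve_left hdet

section PolynomialVectors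

open Polynomial

variable {σ k : Type*} [CommRing k] {q : MvPolynomial σ k}

theorem natDegree_aeval_le_of_isHomogeneous {d n : ℕ} (hq : q.IsHomogeneous d) {z : σ → k[X]}
    (hz : ∀ j, (z j).natDegree ≤ n) : (MvPolynomial.aeval z q).natDegree ≤ d * n := by
  rw [MvPolynomial.aeval_def, MvPolynomial.eval₂_eq]
  refine natDegree_sum_le_of_forall_le _ _ fun e he => ?_
  refine (natDegree_C_mul_le _ _).trans ((natDegree_prod_le _ _).trans ?_)
  rw [hq.degree_eq_sum_deg_support he, Finset.sum_mul]
  exact Finset.sum_le_sum fun j _ => natDegree_pow_le_of_le _ (hz j)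

theorem aeval_C_comp (c : σ → k) (p : MvPolynomial σ k) :
    MvPolynomial.aeval (fun j => Polynomial.C (c j)) p = Polynomial.C (MvPolynomial.eval c p) := by
  rw [← MvPolynomial.coe_aeval_eq_eval]
  exact (MvPolynomial.comp_aeval_apply c (Algebra.ofId k k[X]) p).symm

theorem natDegree_sub_X_pow_mul_C_le {p : k[X]} {n : ℕ} (hp : p.natDegree ≤ n + 1) :
    (p - Polynomial.X ^ (n + 1) * Polynomial.C (p.coeff (n + 1))).natDegree ≤ n := by
  rw [natDegree_le_iff_coeff_eq_zero]
  intro m hm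
  rw [Polynomial.coeff_sub, mul_comm, coeff_C_mul_X_pow]
  split_ifs with h
  · rw [h, sub_self]
  · rw [coeff_eq_zero_of_natDegree_lt (by omega), sub_zero]

theorem exists_eq_add_X_pow_smul {n : ℕ} {z : σ → k[X]} (hz : ∀ j, (z j).natDegree ≤ n + 1) :
    ∃ w : σ → k[X], (∀ j, (w j).natDegree ≤ n) ∧
      z = w + (Polynomial.X ^ (n + 1) : k[X]) • fun j => Polynomial.C ((z j).coeff (n + 1)) :=
  ⟨_, fun j => natDegree_sub_X_pow_mul_C_le (hz j), (sub_add_cancel _ _).symm⟩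

variable [Fintype σ]

theorem natDegree_polar_toQuadraticMap_le (hq : q.IsHomogeneous 2) {n : ℕ}
    {w : σ → k[X]} (hw : ∀ j, (w j).natDegree ≤ n) (c : σ → k) :
    (QuadraticMap.polar (hq.toQuadraticMap k[X]) w (fun j => C (c j))).natDegree ≤ n := by
  classical
  rw [pi_eq_sum_univ' w, ← QuadraticMap.polarBilin_apply_apply, map_sum, LinearMap.sum_apply]
  refine natDegree_sum_le_of_forall_le _ _ fun j _ => ?_
  rw [map_smul, LinearMap.smul_apply, QuadraticMap.polarBilin_apply_apply, smul_eq_mul]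
  have hconst : (Pi.single j 1 : σ → k[X]) = Algebra.ofId k k[X] ∘ Pi.single j 1 := by
    ext1 i; by_cases h : i = j <;> simp [h]
  rw [hconst, show (fun i => Polynomial.C (c i)) = Algebra.ofId k k[X] ∘ c from rfl,
    ← hq.map_polar_toQuadraticMap]
  exact (natDegree_mul_C_le _ _).trans (hw j)

theorem coeff_aeval_two_mul (hq : q.IsHomogeneous 2) {n : ℕ} {z : σ → k[X]}
    (hz : ∀ j, (z j).natDegree ≤ n) :
    (MvPolynomial.aeval z q).coeff (2 * n) = MvPolynomial.eval (fun j => (z j).coeff n) q := by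
  cases n with
  | zero =>
    have hzc : z = fun j => Polynomial.C ((z j).coeff 0) :=
      funext fun j => eq_C_of_natDegree_eq_zero (Nat.le_zero.mp (hz j))
    rw [hzc, aeval_C_comp, coeff_C_zero]
    simp
  | succ n =>
    obtain ⟨w, hw, hzw⟩ := exists_eq_add_X_pow_smul hz
    set c : σ → k := fun j => (z j).coeff (n + 1)
    have hexp := QuadraticMap.map_add_smul (hq.toQuadraticMap k[X]) w
      (fun j => Polynomial.C (c j)) (Polynomial.X ^ (n + 1))
    rw [← hzw] at hexp
    simp only [IsHomogeneous.toQuadraticMap_apply, aeval_C_comp] at hexp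
    rw [hexp, Polynomial.coeff_add, Polynomial.coeff_add, coeff_X_pow_mul', ← pow_mul,
      coeff_X_pow_mul', if_pos (by omega), if_pos (by omega),
      show 2 * (n + 1) - (n + 1) * 2 = 0 by omega, coeff_C_zero,
      coeff_eq_zero_of_natDegree_lt
        ((natDegree_aeval_le_of_isHomogeneous hq hw).trans_lt (by omega)),
      coeff_eq_zero_of_natDegree_lt
        ((natDegree_polar_toQuadraticMap_le hq hw c).trans_lt (by omega)),
      zero_add, zero_add]

end PolynomialVectors

section Pencil

open Polynomial

variable {σ k : Type*} [Field k] {q₁ q₂ : MvPolynomial σ k}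

theorem natDegree_X_pow_add_C_inv_mul_le {P : k[X]} {n : ℕ} {u : k}
    (hP : P.natDegree ≤ n + 1) (hPu : P.coeff (n + 1) = -u) (hu : u ≠ 0) :
    (Polynomial.X ^ (n + 1) + Polynomial.C u⁻¹ * P).natDegree ≤ n := by
  rw [natDegree_le_iff_coeff_eq_zero]
  intro m hm
  rw [Polynomial.coeff_add, Polynomial.coeff_X_pow, Polynomial.coeff_C_mul]
  rcases (show m = n + 1 ∨ n + 1 < m by omega) with rfl | h
  · rw [if_pos rfl, hPu]
    field_simp
    ring
  · rw [if_neg (by omega), coeff_eq_zero_of_natDegree_lt (hP.trans_lt h), mul_zero, add_zero]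

noncomputable def pencil (hq₁ : q₁.IsHomogeneous 2) (hq₂ : q₂.IsHomogeneous 2) :
    QuadraticMap k[X] (σ → k[X]) k[X] :=
  hq₁.toQuadraticMap k[X] + (Polynomial.X : k[X]) • hq₂.toQuadraticMap k[X]

variable (hq₁ : q₁.IsHomogeneous 2) (hq₂ : q₂.IsHomogeneous 2)

theorem pencil_apply (z : σ → k[X]) :
    pencil hq₁ hq₂ z = MvPolynomial.aeval z q₁ + Polynomial.X * MvPolynomial.aeval z q₂ :=
  rfl

theorem pencil_C_comp (c : σ → k) :
    pencil hq₁ hq₂ (fun j => Polynomial.C (c j)) =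
      Polynomial.C (MvPolynomial.eval c q₁) +
        Polynomial.X * Polynomial.C (MvPolynomial.eval c q₂) := by
  rw [pencil_apply, aeval_C_comp, aeval_C_comp]

theorem polar_pencil (x y : σ → k[X]) :
    QuadraticMap.polar (pencil hq₁ hq₂) x y =
      QuadraticMap.polar (hq₁.toQuadraticMap k[X]) x y +
        Polynomial.X * QuadraticMap.polar (hq₂.toQuadraticMap k[X]) x y := by
  rw [pencil, FunLike.coe_add, FunLike.coe_smul, QuadraticMap.polar_add,
    QuadraticMap.polar_smul, smul_eq_mul]

theorem natDegree_pencil_le {n : ℕ} {w : σ → k[X]} (hw : ∀ j, (w j).natDegree ≤ n) :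
    (pencil hq₁ hq₂ w).natDegree ≤ 2 * n + 1 := by
  rw [pencil_apply]
  refine natDegree_add_le_of_degree_le
    ((natDegree_aeval_le_of_isHomogeneous hq₁ hw).trans (by omega)) (natDegree_mul_le.trans ?_)
  have := natDegree_aeval_le_of_isHomogeneous hq₂ hw
  have := natDegree_X_le (R := k)
  omega

theorem pencil_add_X_pow_smul (w : σ → k[X]) (c : σ → k) (m : ℕ) :
    pencil hq₁ hq₂ (w + (Polynomial.X ^ m : k[X]) • fun j => Polynomial.C (c j)) =
      pencil hq₁ hq₂ w +
        Polynomial.X ^ m * QuadraticMap.polar (pencil hq₁ hq₂) w (fun j => Polynomial.C (c j)) +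
        Polynomial.X ^ (2 * m) * (Polynomial.C (MvPolynomial.eval c q₁) +
          Polynomial.X * Polynomial.C (MvPolynomial.eval c q₂)) := by
  rw [QuadraticMap.map_add_smul, pencil_C_comp]
  ring

variable [Fintype σ]

theorem natDegree_polar_pencil_le {n : ℕ} {w : σ → k[X]} (hw : ∀ j, (w j).natDegree ≤ n)
    (c : σ → k) :
    (QuadraticMap.polar (pencil hq₁ hq₂) w (fun j => Polynomial.C (c j))).natDegree ≤ n + 1 := by
  rw [polar_pencil]
  refine natDegree_add_le_of_degree_le
    ((natDegree_polar_toQuadraticMap_le hq₁ hw c).trans (by omega)) (natDegree_mul_le.trans ?_)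
  have := natDegree_polar_toQuadraticMap_le hq₂ hw c
  have := natDegree_X_le (R := k)
  omega

theorem eval_eq_zero_of_pencil_add_X_pow_smul_eq_zero {n : ℕ} {w : σ → k[X]}
    (hw : ∀ j, (w j).natDegree ≤ n) (c : σ → k)
    (h : pencil hq₁ hq₂ (w + (Polynomial.X ^ (n + 1) : k[X]) • fun j => Polynomial.C (c j)) = 0) :
    MvPolynomial.eval c q₂ = 0 ∧
      (QuadraticMap.polar (pencil hq₁ hq₂) w (fun j => Polynomial.C (c j))).coeff (n + 1) +
        MvPolynomial.eval c q₁ = 0 := by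
  set P := QuadraticMap.polar (pencil hq₁ hq₂) w (fun j => Polynomial.C (c j))
  have hP : P.natDegree ≤ n + 1 := natDegree_polar_pencil_le hq₁ hq₂ hw c
  have hpw := natDegree_pencil_le hq₁ hq₂ hw
  have hcoeff : ∀ m, 2 * n + 2 ≤ m → P.coeff (m - (n + 1)) +
      (Polynomial.C (MvPolynomial.eval c q₁) +
        Polynomial.X * Polynomial.C (MvPolynomial.eval c q₂)).coeff (m - (2 * n + 2)) = 0 := by
    intro m hm
    have := congrArg (Polynomial.coeff · m) (pencil_add_X_pow_smul hq₁ hq₂ w c (n + 1))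
    simp only [h, Polynomial.coeff_zero, Polynomial.coeff_add, coeff_X_pow_mul',
      if_pos (show n + 1 ≤ m by omega), if_pos (show 2 * (n + 1) ≤ m by omega),
      coeff_eq_zero_of_natDegree_lt (show (pencil hq₁ hq₂ w).natDegree < m by omega),
      zero_add] at this
    rw [show 2 * n + 2 = 2 * (n + 1) by ring]
    exact this.symm
  constructor
  · have := hcoeff (2 * n + 3) (by omega)
    rw [coeff_eq_zero_of_natDegree_lt (p := P) (by omega),
      show 2 * n + 3 - (2 * n + 2) = 1 by omega] at this
    simpa using this
  · have := hcoeff (2 * n + 2) le_rfl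
    rw [show 2 * n + 2 - (n + 1) = n + 1 by omega, Nat.sub_self] at this
    simpa using this

theorem exists_pencil_eq_zero_of_natDegree_le_succ (hno : ¬HasNontrivialCommonZero q₁ q₂)
    {n : ℕ} {z : σ → k[X]} (hz : z ≠ 0) (hdeg : ∀ j, (z j).natDegree ≤ n + 1)
    (hΦ : pencil hq₁ hq₂ z = 0) :
    ∃ z' : σ → k[X], z' ≠ 0 ∧ (∀ j, (z' j).natDegree ≤ n) ∧ pencil hq₁ hq₂ z' = 0 := by
  set Φ := pencil hq₁ hq₂
  obtain ⟨w, hw, hzw⟩ := exists_eq_add_X_pow_smul hdeg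
  set c : σ → k := fun j => (z j).coeff (n + 1)
  set ĉ : σ → k[X] := fun j => Polynomial.C (c j)
  by_cases hc : c = 0
  · have hĉ : ĉ = 0 := by ext1 j; simp [ĉ, show c j = 0 from congrFun hc j]
    exact ⟨z, hz, by rwa [hzw, hĉ, smul_zero, add_zero], hΦ⟩
  obtain ⟨hv, hu⟩ := eval_eq_zero_of_pencil_add_X_pow_smul_eq_zero hq₁ hq₂ hw c (hzw ▸ hΦ)
  set u := MvPolynomial.eval c q₁
  set P := QuadraticMap.polar Φ w ĉ
  have hu0 : u ≠ 0 := fun h => hno ⟨c, hc, h, hv⟩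
  have hΦĉ : Φ ĉ = Polynomial.C u := by rw [pencil_C_comp, hv, map_zero, mul_zero, add_zero]
  -- `w - μ • ĉ = z - (polar Φ z ĉ / Φ ĉ) • ĉ` is the reflection of `z` in `ĉ`.
  set μ : k[X] := Polynomial.X ^ (n + 1) + Polynomial.C u⁻¹ * P
  have hμ : μ.natDegree ≤ n := natDegree_X_pow_add_C_inv_mul_le
    (natDegree_polar_pencil_le hq₁ hq₂ hw c) (by linear_combination hu) hu0
  refine ⟨w - μ • ĉ, fun h0 => ?_, fun j => ?_, ?_⟩
  · have hzμ : z = (μ + Polynomial.X ^ (n + 1)) • ĉ := by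
      rw [hzw, sub_eq_zero.mp h0, ← add_smul]
    have hsq : (μ + Polynomial.X ^ (n + 1)) ^ 2 * Polynomial.C u = 0 := by
      rw [← hΦ, hzμ, QuadraticMap.map_smul, hΦĉ, smul_eq_mul, sq]
    have hμX : μ + Polynomial.X ^ (n + 1) = 0 := by simpa [hu0] using hsq
    exact hz (by rw [hzμ, hμX, zero_smul])
  · exact (natDegree_sub_le _ _).trans (max_le (hw j) ((natDegree_mul_C_le _ _).trans hμ))
  · have hexp := pencil_add_X_pow_smul hq₁ hq₂ w c (n + 1)
    rw [← hzw, hΦ, hv, map_zero, mul_zero, add_zero] at hexp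
    have hCu : Polynomial.C u⁻¹ * Polynomial.C u = 1 := by
      rw [← map_mul, inv_mul_cancel₀ hu0, map_one]
    rw [sub_eq_add_neg, ← neg_smul, QuadraticMap.map_add_smul, hΦĉ]
    linear_combination -hexp + (2 * Polynomial.X ^ (n + 1) * P + Polynomial.C u⁻¹ * P ^ 2) * hCu

end Pencil

section AmerBrumer

open Polynomial

variable {σ k : Type*} [Fintype σ] [Field k] {q₁ q₂ : MvPolynomial σ k}

theorem hasNontrivialCommonZero_of_pencil_eq_zero (hq₁ : q₁.IsHomogeneous 2)
    (hq₂ : q₂.IsHomogeneous 2) {z : σ → k[X]} (hz : z ≠ 0)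
    (h : MvPolynomial.aeval z q₁ + Polynomial.X * MvPolynomial.aeval z q₂ = 0) :
    HasNontrivialCommonZero q₁ q₂ := by
  by_contra hno
  obtain ⟨n, hn⟩ : ∃ n, ∀ j, (z j).natDegree ≤ n :=
    ⟨Finset.univ.sup fun j => (z j).natDegree, fun j =>
      Finset.le_sup (f := fun j => (z j).natDegree) (Finset.mem_univ j)⟩
  rw [← pencil_apply hq₁ hq₂] at h
  induction n generalizing z with
  | zero =>
    set c : σ → k := fun j => (z j).coeff 0
    have hzc : z = fun j => Polynomial.C (c j) :=
      funext fun j => eq_C_of_natDegree_eq_zero (Nat.le_zero.mp (hn j))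
    rw [hzc, pencil_C_comp] at h
    refine hno ⟨c, fun hc => hz (by rw [hzc, hc]; ext1; simp), ?_, ?_⟩
    · simpa using congrArg (Polynomial.coeff · 0) h
    · simpa using congrArg (Polynomial.coeff · 1) h
  | succ n ih =>
    obtain ⟨z', hz', hn', h'⟩ := exists_pencil_eq_zero_of_natDegree_le_succ hq₁ hq₂ hno hz hn h
    exact ih hz' h' hn'

theorem hasNontrivialCommonZero_of_aeval_eq_zero (hq₁ : q₁.IsHomogeneous 2)
    (hq₂ : q₂.IsHomogeneous 2) {z : σ → k[X]} (hz : z ≠ 0)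
    (h₁ : MvPolynomial.aeval z q₁ = 0) (h₂ : MvPolynomial.aeval z q₂ = 0) :
    HasNontrivialCommonZero q₁ q₂ :=
  hasNontrivialCommonZero_of_pencil_eq_zero hq₁ hq₂ hz (by rw [h₁, h₂, mul_zero, add_zero])

end AmerBrumer

section CubicDescent

open Polynomial

theorem exists_isRoot_of_natDegree_le_one {k : Type*} [Field k] {l₁ l₂ : k[X]}
    (h₁ : l₁.natDegree ≤ 1) (h₂ : l₂.natDegree ≤ 1) (hα : l₁.coeff 1 ≠ 0)
    (hR : l₁.coeff 1 * l₂.coeff 0 = l₂.coeff 1 * l₁.coeff 0) :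
    ∃ t, l₁.IsRoot t ∧ l₂.IsRoot t := by
  have heval : ∀ l : k[X], l.natDegree ≤ 1 → ∀ t, l.eval t = l.coeff 1 * t + l.coeff 0 :=
    fun l hl t => by
      conv_lhs => rw [eq_X_add_C_of_natDegree_le_one hl]
      simp only [Polynomial.eval_add, Polynomial.eval_mul, Polynomial.eval_C, Polynomial.eval_X]
  refine ⟨-l₁.coeff 0 / l₁.coeff 1, ?_, ?_⟩
  · rw [IsRoot, heval l₁ h₁]
    field_simp
    ring
  · rw [IsRoot, heval l₂ h₂]
    field_simp
    linear_combination hR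

variable {σ k : Type*} [Field k] {q q₁ q₂ : MvPolynomial σ k} {f : k[X]} {z : σ → k[X]}

theorem aeval_eq_zero_of_dvd (hq : q.IsHomogeneous 2) (hf : 2 < f.natDegree) {w : σ → k[X]}
    (hw : ∀ j, (w j).natDegree ≤ 1) (h : f ∣ MvPolynomial.aeval w q) :
    MvPolynomial.aeval w q = 0 :=
  eq_zero_of_dvd_of_natDegree_lt h ((natDegree_aeval_le_of_isHomogeneous hq hw).trans_lt hf)

variable [Fintype σ]

theorem hasNontrivialCommonZero_of_isRoot (hq₁ : q₁.IsHomogeneous 2) (hq₂ : q₂.IsHomogeneous 2)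
    (hf : Irreducible f) (hf3 : f.natDegree = 3) (hz : z ≠ 0)
    (hdeg : ∀ j, (z j).natDegree ≤ 2) (h₁ : f ∣ MvPolynomial.aeval z q₁)
    (h₂ : f ∣ MvPolynomial.aeval z q₂) {t : k} (ht₁ : (MvPolynomial.aeval z q₁).IsRoot t)
    (ht₂ : (MvPolynomial.aeval z q₂).IsRoot t) : HasNontrivialCommonZero q₁ q₂ := by
  set y : σ → k := fun j => (z j).eval t
  have hy : ∀ q : MvPolynomial σ k,
      MvPolynomial.eval y q = (MvPolynomial.aeval z q).eval t := by
    intro q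
    rw [← Polynomial.coe_aeval_eq_eval, MvPolynomial.comp_aeval_apply,
      ← MvPolynomial.coe_aeval_eq_eval]
    rfl
  by_cases hy0 : y ≠ 0
  · exact ⟨y, hy0, (hy q₁).trans ht₁, (hy q₂).trans ht₂⟩
  set w : σ → k[X] := fun j => z j /ₘ (Polynomial.X - Polynomial.C t)
  have hzw : z = (Polynomial.X - Polynomial.C t) • w := funext fun j =>
    (mul_divByMonic_eq_iff_isRoot.mpr (congrFun (not_not.mp hy0) j)).symm
  have hw0 : w ≠ 0 := fun h => hz (by rw [hzw, h, smul_zero])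
  have hwdeg : ∀ j, (w j).natDegree ≤ 1 := fun j => by
    rw [natDegree_divByMonic _ (monic_X_sub_C t), natDegree_X_sub_C]
    have := hdeg j
    omega
  have hf_not_dvd : ¬f ∣ Polynomial.X - Polynomial.C t := fun h => by
    have := natDegree_le_of_dvd h (X_sub_C_ne_zero t)
    rw [natDegree_X_sub_C] at this
    omega
  have hw : ∀ q : MvPolynomial σ k, q.IsHomogeneous 2 → f ∣ MvPolynomial.aeval z q →
      MvPolynomial.aeval w q = 0 := by
    intro q hq hfq
    rw [hzw, ← hq.toQuadraticMap_apply, QuadraticMap.map_smul, smul_eq_mul] at hfq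
    refine aeval_eq_zero_of_dvd hq (f := f) (by omega) hwdeg ?_
    rcases hf.prime.dvd_or_dvd hfq with h | h
    · exact absurd (hf.prime.dvd_or_dvd h) (by tauto)
    · exact h
  exact hasNontrivialCommonZero_of_aeval_eq_zero hq₁ hq₂ hw0 (hw q₁ hq₁ h₁) (hw q₂ hq₂ h₂)

theorem hasNontrivialCommonZero_of_natDegree_le_three (hq₁ : q₁.IsHomogeneous 2)
    (hq₂ : q₂.IsHomogeneous 2) (hf3 : f.natDegree = 3) (hz : z ≠ 0)
    (hdeg : ∀ j, (z j).natDegree ≤ 2) (h₁ : f ∣ MvPolynomial.aeval z q₁)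
    (h₂ : f ∣ MvPolynomial.aeval z q₂) (hd₁ : (MvPolynomial.aeval z q₁).natDegree ≤ 3)
    (hd₂ : (MvPolynomial.aeval z q₂).natDegree ≤ 3) : HasNontrivialCommonZero q₁ q₂ := by
  set c : σ → k := fun j => (z j).coeff 2
  by_cases hc : c ≠ 0
  · refine ⟨c, hc, ?_, ?_⟩
    · rw [← coeff_aeval_two_mul hq₁ hdeg]
      exact coeff_eq_zero_of_natDegree_lt (hd₁.trans_lt (by norm_num))
    · rw [← coeff_aeval_two_mul hq₂ hdeg]
      exact coeff_eq_zero_of_natDegree_lt (hd₂.trans_lt (by norm_num))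
  have hdeg' : ∀ j, (z j).natDegree ≤ 1 := fun j => by
    rw [natDegree_le_iff_coeff_eq_zero]
    intro m hm
    rcases (show m = 2 ∨ 2 < m by omega) with rfl | h
    · exact congrFun (not_not.mp hc) j
    · exact coeff_eq_zero_of_natDegree_lt ((hdeg j).trans_lt h)
  exact hasNontrivialCommonZero_of_aeval_eq_zero hq₁ hq₂ hz
    (aeval_eq_zero_of_dvd hq₁ (by omega) hdeg' h₁) (aeval_eq_zero_of_dvd hq₂ (by omega) hdeg' h₂)

theorem hasNontrivialCommonZero_of_mul_aeval_eq (hq₁ : q₁.IsHomogeneous 2)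
    (hq₂ : q₂.IsHomogeneous 2) (hz : z ≠ 0) {l₁ l₂ : k[X]} (h₁ : l₁.natDegree ≤ 1)
    (h₂ : l₂.natDegree ≤ 1) (hR : ¬l₁.coeff 1 * l₂.coeff 0 = l₂.coeff 1 * l₁.coeff 0)
    (h : l₂ * MvPolynomial.aeval z q₁ = l₁ * MvPolynomial.aeval z q₂) :
    HasNontrivialCommonZero q₁ q₂ := by
  refine hasNontrivialCommonZero_of_combination (a := l₂.coeff 0) (b := -l₁.coeff 0)
    (c := l₂.coeff 1) (d := -l₁.coeff 1) (fun h => hR (by linear_combination -h)) ?_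
  refine hasNontrivialCommonZero_of_pencil_eq_zero ((hq₁.C_mul _).add (hq₂.C_mul _))
    ((hq₁.C_mul _).add (hq₂.C_mul _)) hz ?_
  simp only [map_add, map_mul, MvPolynomial.aeval_C, Polynomial.algebraMap_eq, map_neg]
  linear_combination h - MvPolynomial.aeval z q₁ * eq_X_add_C_of_natDegree_le_one h₂ +
    MvPolynomial.aeval z q₂ * eq_X_add_C_of_natDegree_le_one h₁

theorem hasNontrivialCommonZero_of_dvd_aeval (hq₁ : q₁.IsHomogeneous 2)
    (hq₂ : q₂.IsHomogeneous 2) (hf : Irreducible f) (hf3 : f.natDegree = 3) (hz : z ≠ 0)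
    (hdeg : ∀ j, (z j).natDegree ≤ 2) (h₁ : f ∣ MvPolynomial.aeval z q₁)
    (h₂ : f ∣ MvPolynomial.aeval z q₂) : HasNontrivialCommonZero q₁ q₂ := by
  have hl : ∀ {q : MvPolynomial σ k} {l : k[X]}, q.IsHomogeneous 2 →
      MvPolynomial.aeval z q = f * l → l.natDegree ≤ 1 := fun {q l} hq hfl => by
    rcases eq_or_ne l 0 with rfl | hl0
    · simp
    have := natDegree_aeval_le_of_isHomogeneous hq hdeg
    rw [hfl, natDegree_mul hf.ne_zero hl0, hf3] at this
    omega
  obtain ⟨l₁, hl₁⟩ := id h₁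
  obtain ⟨l₂, hl₂⟩ := id h₂
  have hl₁' := eq_X_add_C_of_natDegree_le_one (hl hq₁ hl₁)
  have hl₂' := eq_X_add_C_of_natDegree_le_one (hl hq₂ hl₂)
  have hroot : ∀ t, l₁.IsRoot t → l₂.IsRoot t → HasNontrivialCommonZero q₁ q₂ := fun t ht₁ ht₂ =>
    hasNontrivialCommonZero_of_isRoot hq₁ hq₂ hf hf3 hz hdeg h₁ h₂
      (by rw [hl₁, IsRoot, Polynomial.eval_mul, ht₁, mul_zero])
      (by rw [hl₂, IsRoot, Polynomial.eval_mul, ht₂, mul_zero])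
  by_cases hR : l₁.coeff 1 * l₂.coeff 0 = l₂.coeff 1 * l₁.coeff 0
  · by_cases hα₁ : l₁.coeff 1 = 0
    · by_cases hα₂ : l₂.coeff 1 = 0
      · refine hasNontrivialCommonZero_of_natDegree_le_three hq₁ hq₂ hf3 hz hdeg h₁ h₂ ?_ ?_
        · rw [hl₁, hl₁', hα₁, map_zero, zero_mul, zero_add]
          exact (natDegree_mul_C_le _ _).trans hf3.le
        · rw [hl₂, hl₂', hα₂, map_zero, zero_mul, zero_add]
          exact (natDegree_mul_C_le _ _).trans hf3.le
      · obtain ⟨t, ht₂, ht₁⟩ :=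
          exists_isRoot_of_natDegree_le_one (hl hq₂ hl₂) (hl hq₁ hl₁) hα₂ hR.symm
        exact hroot t ht₁ ht₂
    · obtain ⟨t, ht₁, ht₂⟩ :=
        exists_isRoot_of_natDegree_le_one (hl hq₁ hl₁) (hl hq₂ hl₂) hα₁ hR
      exact hroot t ht₁ ht₂
  · exact hasNontrivialCommonZero_of_mul_aeval_eq hq₁ hq₂ hz (hl hq₁ hl₁) (hl hq₂ hl₂) hR
      (by rw [hl₁, hl₂]; ring)

end CubicDescent

theorem nonempty_powerBasis_of_finrank_prime {k K : Type*} [Field k] [Field K] [Algebra k K]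
    (hp : (Module.finrank k K).Prime) : Nonempty (PowerBasis k K) := by
  have : FiniteDimensional k K := Module.finite_of_finrank_pos hp.pos
  obtain ⟨θ, hθ⟩ : ∃ θ : K, θ ∉ (⊥ : Subalgebra k K) := by
    by_contra! h
    have hbot : (⊥ : Subalgebra k K) = ⊤ := eq_top_iff.mpr fun x _ => h x
    exact hp.ne_one (Subalgebra.bot_eq_top_iff_finrank_eq_one.mp hbot)
  have hadj : Algebra.adjoin k {θ} = ⊤ :=
    ((Subalgebra.isSimpleOrder_of_finrank_prime k K hp).eq_bot_or_eq_top _).resolve_left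
      fun h => hθ (h ▸ Algebra.subset_adjoin rfl)
  exact ⟨PowerBasis.ofAdjoinEqTop (IsIntegral.of_finite k θ) hadj⟩

/-- If two quadratic forms in five variables over `k` have no common nonzero `k`-zero,
then they have no common nonzero zero over any field extension of degree `3`. -/
theorem no_point_over_cubic_extension_of_quadric_intersection
    (k : Type) [Field k]
    (q₁ q₂ : MvPolynomial (Fin 5) k)
    (hdeg₁ : q₁.IsHomogeneous 2) (hdeg₂ : q₂.IsHomogeneous 2)
    (hnopoint : ∀ v : Fin 5 → k, v ≠ 0 → ¬ (eval v q₁ = 0 ∧ eval v q₂ = 0)) :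
    ∀ (K : Type) [Field K] [Algebra k K], Module.finrank k K = 3 →
      ∀ v : Fin 5 → K, v ≠ 0 →
        ¬ (eval v (MvPolynomial.map (algebraMap k K) q₁) = 0 ∧
           eval v (MvPolynomial.map (algebraMap k K) q₂) = 0) := by
  intro K _ _ hK v hv ⟨h₁, h₂⟩
  obtain ⟨pb⟩ := nonempty_powerBasis_of_finrank_prime (hK ▸ Nat.prime_three)
  have hdim : pb.dim = 3 := pb.finrank.symm.trans hK
  choose z hzdeg hzv using fun j => pb.exists_eq_aeval (v j)
  have hdvd : ∀ q : MvPolynomial (Fin 5) k, eval v (MvPolynomial.map (algebraMap k K) q) = 0 →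
      minpoly k pb.gen ∣ MvPolynomial.aeval z q := fun q hq => by
    refine minpoly.dvd k pb.gen ?_
    rw [MvPolynomial.comp_aeval_apply, ← funext hzv, MvPolynomial.aeval_def,
      ← MvPolynomial.eval_map]
    exact hq
  obtain ⟨y, hy, hy₁, hy₂⟩ := hasNontrivialCommonZero_of_dvd_aeval hdeg₁ hdeg₂
    (minpoly.irreducible pb.isIntegral_gen) (by rw [pb.natDegree_minpoly, hdim])
    (fun h => hv (funext fun j => by rw [hzv j, h, Pi.zero_apply, map_zero, Pi.zero_apply]))
    (fun j => by have := hzdeg j; omega) (hdvd q₁ h₁) (hdvd q₂ h₂)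
  exact hnopoint y hy ⟨hy₁, hy₂⟩
end

section
/- Let k be an infinite field, let d ≥ 1, and let f ∈ k[x₀,x₁,x₂,x₃] be a homogeneous polynomial of degree d whose dehomogenization g := f(1,x₁,x₂,x₃) ∈ k[x₁,x₂,x₃] is irreducible, and let F := Frac(k[x₁,x₂,x₃]/(g)) be the function field of the surface X = {f = 0} ⊂ ℙ³_k. Then there exists an intermediate field k ⊆ E ⊆ F such that F is a finite extension of E of degree [F : E] ≤ d and E is isomorphic as a k-algebra to the rational function field k(t₁,t₂). (Projection from a rational point of ℙ³ not on X shows that the degree of irrationality of a degree-d surface in ℙ³ over an infinite field is at most d.) -/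
/-!
Projecting the affine surface `g = 0` from the point at infinity of a coordinate axis along
which `g` has positive degree `m ≤ d`: the other two coordinate functions are algebraically
independent (a nonzero polynomial in them cannot be divisible by `g`), and the function field
is generated over the field they span by the remaining coordinate, which is a root of `g`
viewed as a polynomial of degree `m` in that coordinate.
-/

open MvPolynomial

namespace MvPolynomial

variable {σ τ R : Type*} [CommSemiring R]

theorem totalDegree_aeval_le (s : σ → MvPolynomial τ R) (hs : ∀ i, (s i).totalDegree ≤ 1)
    (p : MvPolynomial σ R) : (aeval s p).totalDegree ≤ p.totalDegree := by
  conv_lhs => rw [p.as_sum, map_sum]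
  refine (totalDegree_finsetSum _ _).trans (Finset.sup_le fun m hm => ?_)
  rw [aeval_monomial, algebraMap_eq, Finsupp.prod]
  calc (C (p.coeff m) * ∏ i ∈ m.support, s i ^ m i).totalDegree
      ≤ ∑ i ∈ m.support, m i * (s i).totalDegree :=
        (totalDegree_mul _ _).trans <| by
          rw [totalDegree_C, zero_add]
          exact (totalDegree_finsetProd _ _).trans
            (Finset.sum_le_sum fun i _ => totalDegree_pow _ _)
    _ ≤ ∑ i ∈ m.support, m i :=
        Finset.sum_le_sum fun i _ => by simpa using Nat.mul_le_mul_left (m i) (hs i)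
    _ ≤ p.totalDegree := le_totalDegree hm

theorem eval₂_aeval_tail_finSuccEquiv {n : ℕ} {A : Type*} [CommSemiring A] [Algebra R A]
    (y : Fin (n + 1) → A) (p : MvPolynomial (Fin (n + 1)) R) :
    (finSuccEquiv R n p).eval₂ ((aeval (Fin.tail y) : MvPolynomial (Fin n) R →ₐ[R] A) :
      MvPolynomial (Fin n) R →+* A) (y 0) = aeval y p := by
  induction p using MvPolynomial.induction_on with
  | C a => simp [finSuccEquiv_apply]
  | add p q hp hq => simp [hp, hq]
  | mul_X p i hp =>
    simp only [map_mul, Polynomial.eval₂_mul, hp, aeval_X]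
    congr 1
    refine Fin.cases ?_ (fun j => ?_) i
    · simp [finSuccEquiv_X_zero]
    · simp [finSuccEquiv_X_succ, Fin.tail]

theorem exists_degreeOf_pos_of_irreducible {K : Type*} [Field K] {p : MvPolynomial σ K}
    (hp : Irreducible p) : ∃ i, 0 < p.degreeOf i := by
  by_contra! h
  have hvars : p.vars = ∅ := Finset.eq_empty_of_forall_notMem fun i hi =>
    mem_vars_iff_degreeOf_ne_zero.mp hi (Nat.le_zero.mp (h i))
  rw [vars_eq_empty_iff_eq_C] at hvars
  have hc : p.coeff 0 ≠ 0 := fun hc => hp.ne_zero (by rw [hvars, hc, map_zero])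
  exact hp.not_isUnit (hvars ▸ (isUnit_iff_ne_zero.mpr hc).map C)

theorem degreeOf_zero_rename_succ {n : ℕ} (q : MvPolynomial (Fin n) R) :
    (rename Fin.succ q).degreeOf 0 = 0 := by
  by_contra h
  simpa [Fin.succ_ne_zero] using vars_rename _ _ (mem_vars_iff_degreeOf_ne_zero.mpr h)

end MvPolynomial

open IntermediateField

theorem IntermediateField.finrank_le_natDegree_of_adjoin_simple_eq_top {E F : Type*} [Field E]
    [Field F] [Algebra E F] {x : F} (hx : E⟮x⟯ = ⊤) {P : Polynomial E} (hP : P ≠ 0)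
    (hPx : Polynomial.aeval x P = 0) :
    FiniteDimensional E F ∧ Module.finrank E F ≤ P.natDegree := by
  have hint : IsIntegral E x := IsAlgebraic.isIntegral ⟨P, hP, hPx⟩
  have hrank : Module.finrank E F = (minpoly E x).natDegree := by
    rw [← adjoin.finrank hint, hx, finrank_top']
  refine ⟨Module.finite_of_finrank_pos (hrank ▸ minpoly.natDegree_pos hint), ?_⟩
  rw [hrank]
  exact Polynomial.natDegree_le_natDegree (minpoly.degree_le_of_ne_zero E x hP hPx)

section Projection

variable {K : Type*} [Field K] {n : ℕ} {g : MvPolynomial (Fin (n + 1)) K}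

theorem algebraicIndependent_tail_of_forall_dvd {A : Type*} [CommRing A] [Algebra K A]
    {y : Fin (n + 1) → A} (hg : 0 < g.degreeOf 0) (hker : ∀ p, aeval y p = 0 → g ∣ p) :
    AlgebraicIndependent K (Fin.tail y) := by
  rw [algebraicIndependent_iff]
  intro q hq
  by_contra hq0
  obtain ⟨r, hr⟩ := hker (rename Fin.succ q) (by rwa [aeval_rename])
  have hne : rename Fin.succ q ≠ 0 :=
    (map_ne_zero_iff _ (rename_injective _ (Fin.succ_injective _))).mpr hq0
  have hr0 : r ≠ 0 := by rintro rfl; exact hne (by rw [hr, mul_zero])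
  have := congrArg (degreeOf 0) hr
  rw [degreeOf_zero_rename_succ, degreeOf_mul_eq (ne_zero_of_degreeOf_ne_zero hg.ne') hr0] at this
  omega

variable {F : Type*} [Field F] [Algebra K F] {y : Fin (n + 1) → F}

theorem finrank_adjoin_tail_le_degreeOf (hind : AlgebraicIndependent K (Fin.tail y))
    (hg0 : g ≠ 0) (hgy : aeval y g = 0) (hgen : adjoin K (Set.range y) = ⊤) :
    FiniteDimensional (adjoin K (Set.range (Fin.tail y))) F ∧
      Module.finrank (adjoin K (Set.range (Fin.tail y))) F ≤ g.degreeOf 0 := by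
  set E := adjoin K (Set.range (Fin.tail y))
  let ψ : MvPolynomial (Fin n) K →+* E :=
    (hind.aevalEquivField : FractionRing (MvPolynomial (Fin n) K) →+* E).comp (algebraMap _ _)
  have hψ : (algebraMap E F).comp ψ = (aeval (Fin.tail y) : MvPolynomial (Fin n) K →ₐ[K] F) :=
    RingHom.ext hind.aevalEquivField_algebraMap_apply_coe
  have hψinj : Function.Injective ψ :=
    hind.aevalEquivField.injective.comp (IsFractionRing.injective _ _)
  have htop : E⟮y 0⟯ = ⊤ := by
    rw [← restrictScalars_eq_top_iff (K := K), adjoin_adjoin_left, ← hgen]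
    conv_rhs => rw [← Fin.cons_self_tail y, Fin.range_cons, ← Set.union_singleton]
  have hP0 : (finSuccEquiv K n g).map ψ ≠ 0 :=
    (Polynomial.map_ne_zero_iff hψinj).mpr ((map_ne_zero_iff _ (AlgEquiv.injective _)).mpr hg0)
  have hPy : Polynomial.aeval (y 0) ((finSuccEquiv K n g).map ψ) = 0 := by
    rw [Polynomial.aeval_def, Polynomial.eval₂_map, hψ, eval₂_aeval_tail_finSuccEquiv, hgy]
  have h := finrank_le_natDegree_of_adjoin_simple_eq_top htop hP0 hPy
  rwa [Polynomial.natDegree_map_eq_of_injective hψinj, natDegree_finSuccEquiv] at h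

theorem exists_algebraicIndependent_finrank_le_degreeOf (hker : ∀ p, aeval y p = 0 ↔ g ∣ p)
    (hgen : adjoin K (Set.range y) = ⊤) {i : Fin (n + 1)} (hi : 0 < g.degreeOf i) :
    ∃ z : Fin n → F, AlgebraicIndependent K z ∧ FiniteDimensional (adjoin K (Set.range z)) F ∧
      Module.finrank (adjoin K (Set.range z)) F ≤ g.degreeOf i := by
  set e := Equiv.swap 0 i
  have hee : Function.Involutive e := Equiv.swap_apply_self 0 i
  have hdeg : (rename e g).degreeOf 0 = g.degreeOf i := by
    rw [← degreeOf_rename_of_injective e.injective i, Equiv.swap_apply_right]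
  have hker' : ∀ p, aeval (y ∘ e) p = 0 → rename e g ∣ p := fun p hp => by
    have := map_dvd (rename e) ((hker (rename e p)).mp (by rwa [aeval_rename]))
    rwa [rename_rename, hee.comp_self, rename_id, AlgHom.id_apply] at this
  have hgy : aeval (y ∘ e) (rename e g) = 0 := by
    rw [aeval_rename, Function.comp_assoc, hee.comp_self, Function.comp_id]
    exact (hker g).mpr dvd_rfl
  have hind := algebraicIndependent_tail_of_forall_dvd (hdeg ▸ hi) hker'
  refine ⟨Fin.tail (y ∘ e), hind, hdeg ▸ finrank_adjoin_tail_le_degreeOf hind ?_ hgy ?_⟩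
  · exact (map_ne_zero_iff _ (rename_injective _ e.injective)).mpr
      (ne_zero_of_degreeOf_ne_zero hi.ne')
  · rwa [e.surjective.range_comp]

end Projection

section FunctionField

variable {σ K : Type*} [Field K] (I : Ideal (MvPolynomial σ K)) (F : Type*) [Field F]
  [Algebra K F] [Algebra (MvPolynomial σ K ⧸ I) F] [IsScalarTower K (MvPolynomial σ K ⧸ I) F]

noncomputable def quotientCoord (i : σ) : F :=
  algebraMap (MvPolynomial σ K ⧸ I) F (Ideal.Quotient.mk I (X i))

theorem aeval_quotientCoord (p : MvPolynomial σ K) :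
    aeval (quotientCoord I F) p = algebraMap (MvPolynomial σ K ⧸ I) F (Ideal.Quotient.mk I p) :=
  DFunLike.congr_fun (show aeval (quotientCoord I F) =
      (IsScalarTower.toAlgHom K (MvPolynomial σ K ⧸ I) F).comp (Ideal.Quotient.mkₐ K I) from
    algHom_ext fun _ => by simp [quotientCoord]) p

variable [IsFractionRing (MvPolynomial σ K ⧸ I) F]

theorem aeval_quotientCoord_eq_zero_iff (p : MvPolynomial σ K) :
    aeval (quotientCoord I F) p = 0 ↔ p ∈ I := by
  rw [aeval_quotientCoord, IsFractionRing.to_map_eq_zero_iff, Ideal.Quotient.eq_zero_iff_mem]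

theorem adjoin_range_quotientCoord_eq_top : adjoin K (Set.range (quotientCoord I F)) = ⊤ := by
  refine eq_top_iff.mpr fun z _ => ?_
  obtain ⟨a, b, -, rfl⟩ := IsFractionRing.div_surjective (A := MvPolynomial σ K ⧸ I) z
  obtain ⟨p, rfl⟩ := Ideal.Quotient.mk_surjective a
  obtain ⟨q, rfl⟩ := Ideal.Quotient.mk_surjective b
  exact (mem_adjoin_range_iff _ _ _).mpr ⟨p, q, by rw [aeval_quotientCoord, aeval_quotientCoord]⟩

end FunctionField

theorem exists_rational_subfield_of_degree_le_general
    (k : Type) [Field k]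
    (d : ℕ)
    (f : MvPolynomial (Fin 4) k) (hdeg : f.IsHomogeneous d)
    (g : MvPolynomial (Fin 3) k) (hg : g = aeval (Fin.cons 1 X) f)
    (hirr : Irreducible g)
    (F : Type) [Field F] [Algebra k F]
    [Algebra (MvPolynomial (Fin 3) k ⧸ Ideal.span {g}) F]
    [IsScalarTower k (MvPolynomial (Fin 3) k ⧸ Ideal.span {g}) F]
    [IsFractionRing (MvPolynomial (Fin 3) k ⧸ Ideal.span {g}) F] :
    ∃ E : IntermediateField k F,
      Nonempty (↥E ≃ₐ[k] RatFunc2 k) ∧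
      FiniteDimensional ↥E F ∧ Module.finrank (↥E) F ≤ d := by
  obtain ⟨i, hi⟩ := exists_degreeOf_pos_of_irreducible hirr
  obtain ⟨z, hz, hfin, hrank⟩ := exists_algebraicIndependent_finrank_le_degreeOf
    (fun p => (aeval_quotientCoord_eq_zero_iff _ F p).trans Ideal.mem_span_singleton)
    (adjoin_range_quotientCoord_eq_top _ F) hi
  have hgd : g.degreeOf i ≤ d := calc
    g.degreeOf i ≤ g.totalDegree := degreeOf_le_totalDegree g i
    _ ≤ f.totalDegree := hg ▸ totalDegree_aeval_le _ (Fin.cases (by simp) fun j => by simp) f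
    _ ≤ d := hdeg.totalDegree_le
  exact ⟨_, ⟨hz.aevalEquivField.symm⟩, hfin, hrank.trans hgd⟩

/-- Over an infinite field, an irreducible degree-`d` surface in `ℙ³` admits a dominant
rational map to `ℙ²` of degree at most `d`: its function field `F` contains an
intermediate field `E ≅ k(t₁,t₂)` with `[F : E] ≤ d`. -/
theorem exists_rational_subfield_of_degree_le
    (k : Type) [Field k] (hk : Infinite k)
    (d : ℕ) (hd : 1 ≤ d)
    (f : MvPolynomial (Fin 4) k) (hdeg : f.IsHomogeneous d)
    (g : MvPolynomial (Fin 3) k) (hg : g = aeval (Fin.cons 1 X) f)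
    (hirr : Irreducible g)
    (F : Type) [Field F] [Algebra k F]
    [Algebra (MvPolynomial (Fin 3) k ⧸ Ideal.span {g}) F]
    [IsScalarTower k (MvPolynomial (Fin 3) k ⧸ Ideal.span {g}) F]
    [IsFractionRing (MvPolynomial (Fin 3) k ⧸ Ideal.span {g}) F] :
    ∃ E : IntermediateField k F,
      Nonempty (↥E ≃ₐ[k] RatFunc2 k) ∧
      FiniteDimensional ↥E F ∧ Module.finrank (↥E) F ≤ d :=
  exists_rational_subfield_of_degree_le_general k d f hdeg g hg hirr F
end

section
/- Let k be a field and let u₁, u₂, u₃ ∈ k³ be nonzero vectors that are pairwise linearly independent (no uᵢ is a k-multiple of uⱼ for i ≠ j). For u ∈ k³ let ν(u) ∈ k^{10} be the vector whose coordinates are all monomials of degree 3 in the coordinates of u, i.e., ν(u)_{(a,b,c)} = u(1)^a · u(2)^b · u(3)^c for all (a,b,c) ∈ ℕ³ with a+b+c = 3. Then ν(u₁), ν(u₂), ν(u₃) are linearly independent over k. (No three points of the cubic Veronese surface in ℙ⁹ are collinear.) -/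
/-- The affine cone over the 3-uple Veronese embedding `ℙ² ↪ ℙ⁹`: the coordinates of
`veronese3 u` are all the monomials of degree `3` in the coordinates of `u`. -/
noncomputable def veronese3 {k : Type*} [Field k] (u : Fin 3 → k) :
    {d : Fin 3 → ℕ // d 0 + d 1 + d 2 = 3} → k :=
  fun d => ∏ i : Fin 3, u i ^ d.1 i

/-- The exponent vector of the monomial `x i * x j * x l`. -/
def verD (i j l : Fin 3) : {d : Fin 3 → ℕ // d 0 + d 1 + d 2 = 3} :=
  ⟨fun m => (if m = i then 1 else 0) + (if m = j then 1 else 0) + (if m = l then 1 else 0),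
    by fin_cases i <;> fin_cases j <;> fin_cases l <;> decide⟩

lemma ver_pair {k : Type} [Field k] (f g h u : Fin 3 → k) :
    (∑ i, f i * u i) * (∑ i, g i * u i) * (∑ i, h i * u i)
      = ∑ p : Fin 3 × Fin 3 × Fin 3,
          f p.1 * g p.2.1 * h p.2.2 * veronese3 u (verD p.1 p.2.1 p.2.2) := by
  simp [Fintype.sum_prod_type, Fin.sum_univ_three, veronese3, verD, Fin.prod_univ_three]
  ring

/-- A separating linear functional: if `w` is not a multiple of `v`, there is a linear
functional vanishing on `v` but not on `w`. -/
lemma ver_sep {k : Type} [Field k] (v w : Fin 3 → k) (hvw : ∀ c : k, w ≠ c • v) :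
    ∃ f : Fin 3 → k, (∑ i, f i * v i) = 0 ∧ (∑ i, f i * w i) ≠ 0 := by
  by_cases hv : v = 0
  · have hw : w ≠ 0 := by simpa [hv] using hvw 0
    obtain ⟨i, hi⟩ := Function.ne_iff.mp hw
    simp only [Pi.zero_apply] at hi
    refine ⟨fun j => if j = i then 1 else 0, by simp [hv], ?_⟩
    simpa [ite_mul, Finset.sum_ite_eq'] using hi
  · obtain ⟨i, hi⟩ := Function.ne_iff.mp hv
    simp only [Pi.zero_apply] at hi
    have hm : ∃ m, v i * w m - v m * w i ≠ 0 := by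
      by_contra hcon
      push_neg at hcon
      apply hvw (w i / v i)
      funext m
      have hcm := hcon m
      simp only [Pi.smul_apply, smul_eq_mul]
      field_simp
      linear_combination hcm
    obtain ⟨m, hm⟩ := hm
    have key : ∀ x : Fin 3 → k,
        ∑ j, ((if j = m then v i else 0) - (if j = i then v m else 0)) * x j
          = v i * x m - v m * x i := by
      intro x
      simp [sub_mul, ite_mul, Finset.sum_sub_distrib, Finset.sum_ite_eq']
    refine ⟨fun j => (if j = m then v i else 0) - (if j = i then v m else 0), ?_, ?_⟩
    · rw [key]; ring
    · rw [key]; exact hm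

/-- No three points of the cubic Veronese surface in `ℙ⁹` are collinear: if
`u₁, u₂, u₃ ∈ k³` are nonzero and pairwise linearly independent, then their images under
the degree-`3` Veronese map are linearly independent. -/
theorem veronese3_linearIndependent
    (k : Type) [Field k]
    (u : Fin 3 → (Fin 3 → k))
    (hne : ∀ j, u j ≠ 0)
    (hpair : ∀ i j, i ≠ j → ∀ c : k, u i ≠ c • u j) :
    LinearIndependent k (fun j : Fin 3 => veronese3 (u j)) := by
  rw [Fintype.linearIndependent_iff]
  intro c hc
  have hc' : ∀ d, ∑ t, c t * veronese3 (u t) d = 0 := by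
    intro d
    have := congrFun hc d
    simpa using this
  have key : ∀ f g h : Fin 3 → k,
      ∑ t, c t * ((∑ i, f i * u t i) * (∑ i, g i * u t i) * (∑ i, h i * u t i)) = 0 := by
    intro f g h
    simp_rw [ver_pair, Finset.mul_sum]
    rw [Finset.sum_comm]
    refine Finset.sum_eq_zero fun p _ => ?_
    have h1 : ∑ t, c t * (f p.1 * g p.2.1 * h p.2.2 * veronese3 (u t) (verD p.1 p.2.1 p.2.2))
        = f p.1 * g p.2.1 * h p.2.2 * ∑ t, c t * veronese3 (u t) (verD p.1 p.2.1 p.2.2) := by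
      rw [Finset.mul_sum]
      exact Finset.sum_congr rfl fun t _ => by ring
    rw [h1, hc', mul_zero]
  intro j
  fin_cases j
  · obtain ⟨f, hf0, hf1⟩ := ver_sep (u 1) (u 0) (hpair 0 1 (by decide))
    obtain ⟨g, hg0, hg1⟩ := ver_sep (u 2) (u 0) (hpair 0 2 (by decide))
    have H := key f f g
    rw [Fin.sum_univ_three, hf0, hg0] at H
    simp only [mul_zero, zero_mul, add_zero] at H
    exact (mul_eq_zero.mp H).resolve_right (mul_ne_zero (mul_ne_zero hf1 hf1) hg1)
  · obtain ⟨f, hf0, hf1⟩ := ver_sep (u 0) (u 1) (hpair 1 0 (by decide))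
    obtain ⟨g, hg0, hg1⟩ := ver_sep (u 2) (u 1) (hpair 1 2 (by decide))
    have H := key f f g
    rw [Fin.sum_univ_three, hf0, hg0] at H
    simp only [mul_zero, zero_mul, add_zero, zero_add] at H
    exact (mul_eq_zero.mp H).resolve_right (mul_ne_zero (mul_ne_zero hf1 hf1) hg1)
  · obtain ⟨f, hf0, hf1⟩ := ver_sep (u 0) (u 2) (hpair 2 0 (by decide))
    obtain ⟨g, hg0, hg1⟩ := ver_sep (u 1) (u 2) (hpair 2 1 (by decide))
    have H := key f f g
    rw [Fin.sum_univ_three, hf0, hg0] at H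
    simp only [mul_zero, zero_mul, add_zero, zero_add] at H
    exact (mul_eq_zero.mp H).resolve_right (mul_ne_zero (mul_ne_zero hf1 hf1) hg1)
end

section
/- Let k be a field and let A be a central simple algebra over k with dim_k A = 9 such that A is not isomorphic as a k-algebra to the algebra of 3×3 matrices over k. Then for every field extension K/k with [K:k] = 2, the K-algebra K ⊗_k A is not isomorphic as a K-algebra to the algebra of 3×3 matrices over K. (A nonsplit central simple algebra of degree 3 remains nonsplit over every quadratic extension; equivalently, a Brauer class of order 3 restricts nontrivially to quadratic extensions.) -/
/-!
By Wedderburn–Artin, `A ≃ Mₙ(D)` for a division algebra `D` with `n² · [D:k] = 9`, so either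
`A` is split or `A = D` is a division algebra of dimension `9`. A splitting `K ⊗ A ≃ M₃(K)` makes
`K³` a module over `A`, hence over `D`; every `D`-module is free, so `[D:k]` divides
`dim_k K³ = 6`, which rules out `[D:k] = 9`.
-/

open TensorProduct Module

theorem finrank_dvd_finrank_of_algHom_end {k D M : Type*} [Field k] [DivisionRing D]
    [Algebra k D] [AddCommGroup M] [Module k M] [Module.Finite k M]
    (φ : D →ₐ[k] Module.End k M) : finrank k D ∣ finrank k M := by
  let _ : Module D M := Module.compHom M φ.toRingHom
  have : IsScalarTower k D M := ⟨fun c d m => by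
    change φ (c • d) m = c • φ d m
    rw [map_smul, LinearMap.smul_apply]⟩
  have : Module.Finite D M := Module.Finite.of_restrictScalars_finite k D M
  exact Dvd.intro _ (finrank_mul_finrank k D M)

theorem IsSimpleRing.nonempty_algEquiv_matrix_of_algHom_end {k A M : Type*} [Field k] [Ring A]
    [Algebra k A] [IsSimpleRing A] [AddCommGroup M] [Module k M] [Module.Finite k M]
    {p : ℕ} (hp : p.Prime) (hA : finrank k A = p ^ 2) (f : A →ₐ[k] Module.End k M)
    (hM : ¬ p ^ 2 ∣ finrank k M) : Nonempty (A ≃ₐ[k] Matrix (Fin p) (Fin p) k) := by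
  have : Module.Finite k A := Module.finite_of_finrank_pos (by rw [hA]; exact pow_pos hp.pos 2)
  have : IsArtinianRing A := IsArtinianRing.of_finite k A
  obtain ⟨n, _, D, _, _, _, ⟨e⟩⟩ := IsSimpleRing.exists_algEquiv_matrix_divisionRing_finite k A
  have hdimA : n ^ 2 * finrank k D = p ^ 2 := by
    rw [← hA, e.toLinearEquiv.finrank_eq, finrank_matrix]; simp [sq]
  have hdvd : finrank k D ∣ finrank k M :=
    finrank_dvd_finrank_of_algHom_end
      (f.comp (e.symm.toAlgHom.comp (Matrix.scalarAlgHom (Fin n) k)))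
  have hn : n ∣ p := (Nat.pow_dvd_pow_iff two_ne_zero).mp (Dvd.intro _ hdimA)
  rcases hp.eq_one_or_self_of_dvd n hn with rfl | rfl
  · rw [one_pow, one_mul] at hdimA
    exact absurd (hdimA ▸ hdvd) hM
  · have hD : finrank k D = 1 := by simpa [hp.ne_zero] using hdimA
    let eD : D ≃ₐ[k] k := (AlgEquiv.ofBijective (Algebra.ofId k D)
      (Algebra.finrank_eq_one_iff_bijective_algebraMap.mp hD)).symm
    exact ⟨e.trans eD.mapMatrix⟩

theorem csa_degree_three_nonsplit_over_quadratic_extension_general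
    (k : Type) [Field k]
    (A : Type) [Ring A] [Algebra k A]
    [IsSimpleRing A]
    (hdim : Module.finrank k A = 9)
    (hnonsplit : ¬ Nonempty (A ≃ₐ[k] Matrix (Fin 3) (Fin 3) k)) :
    ∀ (K : Type) [Field K] [Algebra k K], Module.finrank k K = 2 →
      ¬ Nonempty ((K ⊗[k] A) ≃ₐ[K] Matrix (Fin 3) (Fin 3) K) := by
  intro K _ _ hK ⟨e⟩
  have : Module.Finite k K := Module.finite_of_finrank_eq_succ hK
  let actionOnK3 : A →ₐ[k] Module.End k (Fin 3 → K) :=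
    (Algebra.lsmul k k (Fin 3 → K)).comp
      ((e.restrictScalars k).toAlgHom.comp Algebra.TensorProduct.includeRight)
  exact hnonsplit <| IsSimpleRing.nonempty_algEquiv_matrix_of_algHom_end Nat.prime_three hdim
    actionOnK3 (by simp [Module.finrank_pi_fintype, hK])

/-- A central simple algebra of dimension `9` (degree `3`) over `k` that is not split
remains nonsplit over every quadratic extension `K/k`. -/
theorem csa_degree_three_nonsplit_over_quadratic_extension
    (k : Type) [Field k]
    (A : Type) [Ring A] [Algebra k A]
    [Algebra.IsCentral k A] [IsSimpleRing A]
    (hdim : Module.finrank k A = 9)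
    (hnonsplit : ¬ Nonempty (A ≃ₐ[k] Matrix (Fin 3) (Fin 3) k)) :
    ∀ (K : Type) [Field K] [Algebra k K], Module.finrank k K = 2 →
      ¬ Nonempty ((K ⊗[k] A) ≃ₐ[K] Matrix (Fin 3) (Fin 3) K) :=
  csa_degree_three_nonsplit_over_quadratic_extension_general k A hdim hnonsplit
end

section
/- Let k be a field of characteristic 2, let w ∈ k be an element that is not a square in k, let K = k(β) where β² = w, and let v ∈ K³ be a vector that is not a K-scalar multiple of any nonzero vector in k³ (i.e., the corresponding point of ℙ²(K) does not lie in ℙ²(k)). Then there exist a matrix g ∈ GL₃(k) and a scalar λ ∈ K× such that λ · (g v) = (0, β, 1). (Every point of ℙ²(K) not defined over k can be moved by a k-linear change of coordinates to (0 : √w : 1).) -/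
/-! Since `β² ∈ k`, the subalgebra generated by `β` is `k + kβ`, so `v = x + βy` with
`x, y ∈ k³`. A nontrivial relation between `x` and `y` would make `v` a `K`-multiple of a
vector of `k³`, so `x, y` are linearly independent; completing them to a basis `z, y, x` of
`k³` gives `M ∈ GL₃(k)` with `M (0, β, 1) = v`, and `g = M⁻¹` works with `λ = 1`. -/

open Matrix

section Adjoin

variable {R A : Type*} [CommSemiring R] [CommSemiring A] [Algebra R A] {β : A} {w : R}

theorem Algebra.mem_span_pair_one_of_mem_adjoin_of_sq_eq (hβ : β ^ 2 = algebraMap R A w) {c : A}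
    (hc : c ∈ Algebra.adjoin R {β}) : c ∈ Submodule.span R {1, β} := by
  induction hc using Algebra.adjoin_induction with
  | mem x hx =>
    rw [Set.mem_singleton_iff.mp hx]
    exact Submodule.subset_span (by simp)
  | algebraMap r => exact Submodule.mem_span_pair.mpr ⟨r, 0, by simp [Algebra.smul_def]⟩
  | add x y _ _ hx hy => exact Submodule.add_mem _ hx hy
  | mul x y _ _ hx hy =>
    obtain ⟨a, b, rfl⟩ := Submodule.mem_span_pair.mp hx
    obtain ⟨c, d, rfl⟩ := Submodule.mem_span_pair.mp hy
    refine Submodule.mem_span_pair.mpr ⟨a * c + b * d * w, a * d + b * c, ?_⟩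
    simp only [Algebra.smul_def, map_add, map_mul, ← hβ]
    ring

theorem exists_eq_algebraMap_add_algebraMap_mul (hβ : β ^ 2 = algebraMap R A w)
    (hgen : Algebra.adjoin R {β} = ⊤) (c : A) :
    ∃ a b : R, c = algebraMap R A a + algebraMap R A b * β := by
  obtain ⟨a, b, hab⟩ := Submodule.mem_span_pair.mp
    (Algebra.mem_span_pair_one_of_mem_adjoin_of_sq_eq hβ
      (hgen ▸ Algebra.mem_top : c ∈ Algebra.adjoin R {β}))
  exact ⟨a, b, by rw [← hab, Algebra.smul_def, Algebra.smul_def, mul_one]⟩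

end Adjoin

theorem linearIndependent_pair_of_forall_ne_smul_algebraMap {k K ι : Type*} [Field k]
    [CommRing K] [Algebra k K] [Nonempty ι] {β : K} {x y : ι → k}
    (hv : ∀ u : ι → k, u ≠ 0 → ∀ μ : K,
      (fun i => algebraMap k K (x i) + algebraMap k K (y i) * β) ≠
        μ • fun i => algebraMap k K (u i)) :
    LinearIndependent k ![y, x] := by
  have hv_all : ∀ (u : ι → k) (μ : K),
      (fun i => algebraMap k K (x i) + algebraMap k K (y i) * β) ≠
        μ • fun i => algebraMap k K (u i) := by
    intro u μ h
    by_cases hu : u = 0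
    · exact hv (fun _ => 1) (Function.ne_iff.mpr ⟨Classical.arbitrary ι, one_ne_zero⟩) 0
        (by rw [h, hu]; ext; simp)
    · exact hv u hu μ h
  rw [LinearIndependent.pair_iff]
  intro s t hst
  by_contra hne
  rcases eq_or_ne s 0 with rfl | hs
  · have hx : x = 0 := by simpa [show t ≠ 0 from fun ht => hne ⟨rfl, ht⟩] using hst
    exact hv_all y β (funext fun i => by simp [hx, mul_comm])
  · have hy : y = (-(t / s)) • x := by
      funext i
      have := congrFun hst i
      simp only [Pi.add_apply, Pi.smul_apply, smul_eq_mul, Pi.zero_apply] at this ⊢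
      field_simp
      linear_combination this
    refine hv_all x (1 + algebraMap k K (-(t / s)) * β) (funext fun i => ?_)
    simp only [hy, Pi.smul_apply, smul_eq_mul, map_mul]
    ring

theorem LinearIndependent.exists_isUnit_transpose_of_cons {k : Type*} [Field k] {n : ℕ}
    {f : Fin n → Fin (n + 1) → k} (hf : LinearIndependent k f) :
    ∃ z, IsUnit (of (Fin.cons z f : Fin (n + 1) → Fin (n + 1) → k))ᵀ := by
  obtain ⟨z, hz⟩ := exists_linearIndependent_cons_of_lt_finrank hf (by simp)
  exact ⟨z, (isUnit_transpose _).mpr (linearIndependent_rows_iff_isUnit.mp hz)⟩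

theorem move_point_to_standard_position_char_two_general
    (k : Type) [Field k]
    (w : k)
    (K : Type) [Field K] [Algebra k K]
    (β : K) (hβ : β ^ 2 = algebraMap k K w)
    (hgen : Algebra.adjoin k ({β} : Set K) = ⊤)
    (v : Fin 3 → K)
    (hv : ∀ u : Fin 3 → k, u ≠ 0 → ∀ μ : K, v ≠ μ • fun i => algebraMap k K (u i)) :
    ∃ (g : GL (Fin 3) k) (lam : K), lam ≠ 0 ∧
      lam • ((g : Matrix (Fin 3) (Fin 3) k).map (algebraMap k K)).mulVec v
        = ![0, β, 1] := by
  choose x y hxy using fun i => exists_eq_algebraMap_add_algebraMap_mul hβ hgen (v i)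
  obtain rfl : v = fun i => algebraMap k K (x i) + algebraMap k K (y i) * β := funext hxy
  obtain ⟨z, hM⟩ : ∃ z, IsUnit (of ![z, y, x])ᵀ :=
    (linearIndependent_pair_of_forall_ne_smul_algebraMap hv).exists_isUnit_transpose_of_cons
  have hvM : (fun i => algebraMap k K (x i) + algebraMap k K (y i) * β) =
      ((of ![z, y, x])ᵀ.map (algebraMap k K)) *ᵥ ![0, β, 1] := by
    funext i
    simp [mulVec, dotProduct, Fin.sum_univ_three, add_comm]
  refine ⟨hM.unit⁻¹, 1, one_ne_zero, ?_⟩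
  rw [one_smul, hvM, mulVec_mulVec, ← Matrix.map_mul, hM.val_inv_mul]
  simp

/-- In characteristic `2`, with `K = k(√w)` a purely inseparable quadratic extension,
every point of `ℙ²(K)` not defined over `k` can be moved by a `k`-linear change of
coordinates (and rescaling) to `(0 : √w : 1)`. -/
theorem move_point_to_standard_position_char_two
    (k : Type) [Field k] [CharP k 2]
    (w : k) (hw : ∀ a : k, a ^ 2 ≠ w)
    (K : Type) [Field K] [Algebra k K]
    (β : K) (hβ : β ^ 2 = algebraMap k K w)
    (hgen : Algebra.adjoin k ({β} : Set K) = ⊤)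
    (v : Fin 3 → K)
    (hv : ∀ u : Fin 3 → k, u ≠ 0 → ∀ μ : K, v ≠ μ • fun i => algebraMap k K (u i)) :
    ∃ (g : GL (Fin 3) k) (lam : K), lam ≠ 0 ∧
      lam • ((g : Matrix (Fin 3) (Fin 3) k).map (algebraMap k K)).mulVec v
        = ![0, β, 1] :=
  move_point_to_standard_position_char_two_general k w K β hβ hgen v hv
end

section
/- Let R be a discrete valuation ring with fraction field K, uniformizer π, and residue field κ = R/(π). Let f ∈ R[x,y,z] be a homogeneous polynomial of degree 3 whose reduction f̄ ∈ κ[x,y,z] has no nonzero zero in κ³. Then the only solution (w,x,y,z) ∈ K⁴ of the equation π w³ = f(x,y,z) is (0,0,0,0). (The cubic surface π w³ = f(x,y,z) in ℙ³_K has no K-rational points.) -/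
/-!
Infinite descent. Clearing denominators gives a solution `π a³ = f(b)` over `R`. Modulo `π`
this reads `f̄(b̄) = 0`, so `π` divides every `bᵢ`; then `π³ ∣ f(b) = π a³` forces `π ∣ a`, and
`(a, b) / π` is again a solution. Hence every coordinate is divisible by all powers of `π`,
so it vanishes.
-/

open MvPolynomial

namespace MvPolynomial

variable {R σ : Type*} [CommRing R]

theorem IsHomogeneous.eval_smul {f : MvPolynomial σ R} {n : ℕ} (hf : f.IsHomogeneous n)
    (c : R) (x : σ → R) : eval (c • x) f = c ^ n * eval x f := by
  rw [eval_eq, eval_eq, Finset.mul_sum]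
  refine Finset.sum_congr rfl fun d hd => ?_
  have hdeg : ∑ i ∈ d.support, d i = n := by
    simpa [Finsupp.weight, Finsupp.linearCombination, Finsupp.sum] using hf (mem_support_iff.mp hd)
  simp only [Pi.smul_apply, smul_eq_mul, mul_pow, Finset.prod_mul_distrib,
    Finset.prod_pow_eq_pow_sum, hdeg]
  ring

theorem forall_mem_of_eval_mem {I : Ideal R} {f : MvPolynomial σ R}
    (hf : ∀ u : σ → R ⧸ I, u ≠ 0 → eval u (map (Ideal.Quotient.mk I) f) ≠ 0)
    {b : σ → R} (hb : eval b f ∈ I) (i : σ) : b i ∈ I := by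
  by_contra hbi
  refine hf (Ideal.Quotient.mk I ∘ b) (fun h => hbi ?_) ?_
  · exact Ideal.Quotient.eq_zero_iff_mem.mp (congrFun h i)
  · rw [← map_eval, Ideal.Quotient.eq_zero_iff_mem]
    exact hb

end MvPolynomial

section Descent

variable {R σ : Type*} [CommRing R] [IsDomain R] {π : R} {f : MvPolynomial σ R} {n : ℕ}

theorem exists_descent_of_prime_mul_pow_eq_eval (hπ : Prime π) (hf : f.IsHomogeneous n) (hn : 2 ≤ n)
    (hred : ∀ u : σ → R ⧸ Ideal.span {π}, u ≠ 0 →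
      eval u (map (Ideal.Quotient.mk (Ideal.span {π})) f) ≠ 0)
    {a : R} {b : σ → R} (h : π * a ^ n = eval b f) :
    ∃ (a' : R) (b' : σ → R), a = π * a' ∧ b = π • b' ∧ π * a' ^ n = eval b' f := by
  have hb : ∀ i, π ∣ b i := fun i => Ideal.mem_span_singleton.mp <|
    forall_mem_of_eval_mem hred (Ideal.mem_span_singleton.mpr ⟨a ^ n, h.symm⟩) i
  choose b' hb' using hb
  have hbb' : b = π • b' := funext hb'
  obtain ⟨m, rfl⟩ := Nat.exists_eq_add_of_le' hn
  have hπ0 : π ^ (m + 1) ≠ 0 := pow_ne_zero _ hπ.ne_zero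
  have ha : a ^ (m + 2) = π ^ (m + 1) * eval b' f := by
    refine mul_left_cancel₀ hπ.ne_zero ?_
    rw [h, hbb', hf.eval_smul]
    ring
  obtain ⟨a', rfl⟩ : π ∣ a := hπ.dvd_of_dvd_pow (n := m + 2) ⟨π ^ m * eval b' f, by rw [ha]; ring⟩
  refine ⟨a', b', rfl, hbb', mul_left_cancel₀ hπ0 ?_⟩
  rw [← ha]
  ring

theorem pow_dvd_of_prime_mul_pow_eq_eval (hπ : Prime π) (hf : f.IsHomogeneous n) (hn : 2 ≤ n)
    (hred : ∀ u : σ → R ⧸ Ideal.span {π}, u ≠ 0 →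
      eval u (map (Ideal.Quotient.mk (Ideal.span {π})) f) ≠ 0)
    (k : ℕ) {a : R} {b : σ → R} (h : π * a ^ n = eval b f) :
    π ^ k ∣ a ∧ ∀ i, π ^ k ∣ b i := by
  induction k generalizing a b with
  | zero => simp
  | succ k ih =>
    obtain ⟨a', b', rfl, rfl, h'⟩ := exists_descent_of_prime_mul_pow_eq_eval hπ hf hn hred h
    obtain ⟨ha', hb'⟩ := ih h'
    rw [pow_succ']
    exact ⟨mul_dvd_mul_left π ha', fun i => mul_dvd_mul_left π (hb' i)⟩

theorem eq_zero_of_prime_mul_pow_eq_eval [WfDvdMonoid R] (hπ : Prime π)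
    (hf : f.IsHomogeneous n) (hn : 2 ≤ n)
    (hred : ∀ u : σ → R ⧸ Ideal.span {π}, u ≠ 0 →
      eval u (map (Ideal.Quotient.mk (Ideal.span {π})) f) ≠ 0)
    {a : R} {b : σ → R} (h : π * a ^ n = eval b f) : a = 0 ∧ b = 0 := by
  have eq_zero_of_forall_pow_dvd {x : R} (hx : ∀ k, π ^ k ∣ x) : x = 0 :=
    not_not.mp fun hx0 =>
      FiniteMultiplicity.not_iff_forall.mpr hx (.of_not_isUnit hπ.not_isUnit hx0)
  have hdvd := fun k => pow_dvd_of_prime_mul_pow_eq_eval hπ hf hn hred k h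
  exact ⟨eq_zero_of_forall_pow_dvd fun k => (hdvd k).1,
    funext fun i => eq_zero_of_forall_pow_dvd fun k => (hdvd k).2 i⟩

end Descent

theorem eq_zero_of_algebraMap_mul_pow_eq_eval {R σ K : Type*} [CommRing R] [Field K] [Algebra R K]
    [IsFractionRing R K] [Finite σ] {f : MvPolynomial σ R} {n : ℕ} (hf : f.IsHomogeneous n)
    (c : R) (hR : ∀ (a : R) (b : σ → R), c * a ^ n = eval b f → a = 0 ∧ b = 0)
    {w : K} {v : σ → K} (h : algebraMap R K c * w ^ n = eval v (map (algebraMap R K) f)) :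
    w = 0 ∧ v = 0 := by
  set φ := algebraMap R K
  obtain ⟨d, hd⟩ := IsLocalization.exist_integer_multiples_of_finite (nonZeroDivisors R)
    fun o : Option σ => o.elim w v
  choose r hr using hd
  have hφd : φ d ≠ 0 := (IsLocalization.map_units K d).ne_zero
  have hw : φ (r none) = φ d * w := by simpa [Algebra.smul_def] using hr none
  have hv : φ ∘ (r ∘ some) = φ d • v := funext fun i => by
    simpa [Algebra.smul_def] using hr (some i)
  have hint : c * r none ^ n = eval (r ∘ some) f := by
    refine IsFractionRing.injective R K ?_
    rw [map_eval, hv, (hf.map φ).eval_smul, ← h, map_mul, map_pow, hw]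
    ring
  obtain ⟨ha, hb⟩ := hR _ _ hint
  refine ⟨?_, funext fun i => ?_⟩
  · simpa [ha, hφd] using hw
  · simpa [hb, hφd] using congrFun hv i

/-- Let `R` be a DVR with fraction field `K`, uniformizer `π` and residue field
`κ = R/(π)`. If `f` is a cubic form over `R` whose reduction mod `π` has no nonzero zero
over `κ`, then the only solution in `K⁴` of `π w³ = f(x, y, z)` is the zero solution. -/
theorem no_rational_point_pi_w_cubed_eq_cubic
    (R : Type) [CommRing R] [IsDomain R] [IsDiscreteValuationRing R]
    (K : Type) [Field K] [Algebra R K] [IsFractionRing R K]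
    (π : R) (hπ : Irreducible π)
    (f : MvPolynomial (Fin 3) R) (hdeg : f.IsHomogeneous 3)
    (hred : ∀ u : Fin 3 → (R ⧸ Ideal.span {π}), u ≠ 0 →
      eval u (MvPolynomial.map (Ideal.Quotient.mk (Ideal.span {π})) f) ≠ 0)
    (w : K) (v : Fin 3 → K)
    (heq : algebraMap R K π * w ^ 3 = eval v (MvPolynomial.map (algebraMap R K) f)) :
    w = 0 ∧ v = 0 :=
  eq_zero_of_algebraMap_mul_pow_eq_eval hdeg π
    (fun _ _ h => eq_zero_of_prime_mul_pow_eq_eval hπ.prime hdeg (by norm_num) hred h) heq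
end
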